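/- arXiv:2312.10535 — 6 statements merged into one kernel-verified Lean document; each statement's English description precedes it below -/
import Mathlib

section
/- For every k ≥ 1 and every coloring f : 2^{<ω} → k, there exists a set H ⊆ 2^{<ω} with H ≅ 2^{<ω} that is monochromatic for f (the tree pigeonhole principle TT^1). -/
/-- `H ⊆ 2^{<ω}` is order-isomorphic (under the prefix relation) to the full
binary tree `2^{<ω}`: there is a map from all binary strings onto `H` that
preserves and reflects the prefix relation. -/
def FullBinTreeIso (H : Set (List Bool)) : Prop :=
  ∃ e : List Bool → List Bool,
    Set.range e = H ∧ ∀ σ τ : List Bool, σ <+: τ ↔ e σ <+: e τ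

/-- If two binary strings are incomparable, they split at some node. -/
lemma exists_split : ∀ (σ τ : List Bool), ¬ σ <+: τ → ¬ τ <+: σ →
    ∃ ρ b, (ρ ++ [b]) <+: σ ∧ (ρ ++ [!b]) <+: τ := by
  intro σ
  induction σ with
  | nil => intro τ h _; exact absurd (List.nil_prefix) h
  | cons a s ih =>
    intro τ h1 h2
    match τ with
    | [] => exact absurd List.nil_prefix h2
    | c :: t =>
      by_cases hac : a = c
      · subst hac
        have h1' : ¬ s <+: t := fun hp => h1 (by simpa [List.cons_prefix_cons] using hp)
        have h2' : ¬ t <+: s := fun hp => h2 (by simpa [List.cons_prefix_cons] using hp)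
        obtain ⟨ρ, b, hb1, hb2⟩ := ih t h1' h2'
        exact ⟨a :: ρ, b, by simpa [List.cons_prefix_cons] using hb1,
          by simpa [List.cons_prefix_cons] using hb2⟩
      · refine ⟨[], a, by simp, ?_⟩
        have hcb : (!a) = c := by cases a <;> cases c <;> simp_all
        simp [hcb]

/-- From a choice function extending every node, build a prefix-embedding
all of whose values are values of the choice function. -/
lemma iso_of_choice (c : List Bool → List Bool) (hc : ∀ τ, τ <+: c τ) :
    ∃ e : List Bool → List Bool, (∀ σ, ∃ τ, e σ = c τ) ∧
      ∀ σ τ, σ <+: τ ↔ e σ <+: e τ := by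
  set e : List Bool → List Bool :=
    fun σ => σ.foldl (fun acc b => c (acc ++ [b])) (c []) with he
  have e_snoc : ∀ σ b, e (σ ++ [b]) = c (e σ ++ [b]) := by
    intro σ b; simp [he, List.foldl_append]
  have hrange : ∀ σ, ∃ τ, e σ = c τ := by
    intro σ
    induction σ using List.reverseRecOn with
    | nil => exact ⟨[], rfl⟩
    | append_singleton s b ih => exact ⟨e s ++ [b], e_snoc s b⟩
  have mono : ∀ σ l, e σ <+: e (σ ++ l) := by
    intro σ l
    induction l using List.reverseRecOn with
    | nil => simp
    | append_singleton l' b ih =>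
      rw [← List.append_assoc]
      have h1 : e (σ ++ l') ++ [b] <+: e ((σ ++ l') ++ [b]) := by
        rw [e_snoc]; exact hc _
      exact ih.trans ((List.prefix_append _ _).trans h1)
  have mono' : ∀ σ τ, σ <+: τ → e σ <+: e τ := by
    rintro σ τ ⟨l, rfl⟩; exact mono σ l
  have snoc_strict : ∀ σ b, e σ ++ [b] <+: e (σ ++ [b]) := by
    intro σ b; rw [e_snoc]; exact hc _
  have hlen : ∀ σ τ, σ <+: τ → σ ≠ τ → (e σ).length < (e τ).length := by
    rintro σ τ ⟨l, rfl⟩ hne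
    match l with
    | [] => simp at hne
    | b :: l' =>
      have h1 : e (σ ++ [b]) <+: e (σ ++ (b :: l')) := by
        have := mono (σ ++ [b]) l'
        simpa using this
      have h2 := (snoc_strict σ b).trans h1
      have := h2.length_le
      simp at this
      omega
  refine ⟨e, hrange, fun σ τ => ⟨mono' σ τ, fun h => ?_⟩⟩
  by_cases hst : σ <+: τ
  · exact hst
  by_cases hts : τ <+: σ
  · have hne : τ ≠ σ := fun heq => hst (heq ▸ List.prefix_refl _)
    have := hlen τ σ hts hne
    have := h.length_le
    omega
  · obtain ⟨ρ, b, hb1, hb2⟩ := exists_split σ τ hst hts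
    have p1 : e ρ ++ [b] <+: e τ := by
      obtain ⟨l, hl⟩ := hb1
      have : e (ρ ++ [b]) <+: e σ := by
        rw [← hl] at *
        exact mono' _ _ ⟨l, hl⟩
      exact ((snoc_strict ρ b).trans this).trans h
    have p2 : e ρ ++ [!b] <+: e τ := by
      have : e (ρ ++ [!b]) <+: e τ := mono' _ _ hb2
      exact (snoc_strict ρ (!b)).trans this
    have hle : (e ρ ++ [b]).length ≤ (e ρ ++ [!b]).length := by simp
    have hpp := List.prefix_of_prefix_length_le p1 p2 hle
    have heq : e ρ ++ [b] = e ρ ++ [!b] := hpp.eq_of_length (by simp)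
    simp at heq

lemma tt1_aux : ∀ k, ∀ f : List Bool → ℕ, (∀ σ, f σ < k) →
    ∃ H : Set (List Bool), FullBinTreeIso H ∧ ∃ i, ∀ σ ∈ H, f σ = i := by
  intro k
  induction k with
  | zero => intro f hf; exact absurd (hf []) (Nat.not_lt_zero _)
  | succ k ih =>
    intro f hf
    by_cases hd : ∀ τ, ∃ ρ, τ <+: ρ ∧ f ρ = k
    · choose c hc1 hc2 using hd
      obtain ⟨e, hrange, hiff⟩ := iso_of_choice c hc1
      refine ⟨Set.range e, ⟨e, rfl, hiff⟩, k, ?_⟩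
      rintro σ ⟨τ, rfl⟩
      obtain ⟨ρ, hρ⟩ := hrange τ
      rw [hρ]; exact hc2 ρ
    · push_neg at hd
      obtain ⟨τ₀, hτ₀⟩ := hd
      have hg : ∀ σ, f (τ₀ ++ σ) < k := by
        intro σ
        have h1 := hf (τ₀ ++ σ)
        have h2 := hτ₀ (τ₀ ++ σ) (List.prefix_append _ _)
        omega
      obtain ⟨H', ⟨e', he'1, he'2⟩, i, hi⟩ := ih (fun σ => f (τ₀ ++ σ)) hg
      refine ⟨Set.range (fun σ => τ₀ ++ e' σ), ⟨_, rfl, ?_⟩, i, ?_⟩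
      · intro σ τ
        rw [he'2]
        exact (List.prefix_append_right_inj τ₀).symm
      · rintro σ ⟨τ, rfl⟩
        exact hi (e' τ) (he'1 ▸ Set.mem_range_self τ)

/-- The tree pigeonhole principle `TT¹`: for every `k ≥ 1` and every coloring
`f : 2^{<ω} → k`, there is an `H ≅ 2^{<ω}` monochromatic for `f`. -/
theorem tree_pigeonhole (k : ℕ) (hk : 1 ≤ k) (f : List Bool → ℕ)
    (hf : ∀ σ, f σ < k) :
    ∃ H : Set (List Bool), FullBinTreeIso H ∧ ∃ i, ∀ σ ∈ H, f σ = i :=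
  tt1_aux k f hf
end

section
/- Let f : 2^{<ω} → k be a coloring, i < k, and σ ∈ 2^{<ω}. If the set {τ ∈ 2^{<ω} : f(τ) = i} is dense above σ, then there exists H ⊆ 2^{<ω} with H ≅ 2^{<ω} that is monochromatic for f with color i and such that every element of H extends σ. -/
/-- `A` is dense above `σ`: every extension of `σ` has a further extension in `A`. -/
def DenseAbove (A : Set (List Bool)) (σ : List Bool) : Prop :=
  ∀ τ, σ <+: τ → ∃ ρ, τ <+: ρ ∧ ρ ∈ A

section Aux

variable (σ : List Bool) (p : List Bool → List Bool)
  (hp1 : ∀ τ, σ <+: τ → τ <+: p τ)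

private def stp (c : List Bool) (b : Bool) : List Bool := p (c ++ [b])

include hp1

private lemma foldl_prefix : ∀ δ c, σ <+: c →
    c <+: List.foldl (stp p) c δ ∧ σ <+: List.foldl (stp p) c δ := by
  intro δ
  induction δ with
  | nil => intro c hc; exact ⟨List.prefix_refl _, hc⟩
  | cons b δ ih =>
    intro c hc
    have h1 : σ <+: c ++ [b] := hc.trans (List.prefix_append _ _)
    have h2 : c ++ [b] <+: stp p c b := hp1 _ h1
    have h3 : c <+: stp p c b := (List.prefix_append _ _).trans h2
    have hσ : σ <+: stp p c b := hc.trans h3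
    obtain ⟨h4, h5⟩ := ih (stp p c b) hσ
    exact ⟨h3.trans h4, h5⟩

private lemma foldl_length : ∀ δ c, σ <+: c →
    c.length + δ.length ≤ (List.foldl (stp p) c δ).length := by
  intro δ
  induction δ with
  | nil => intro c _; simp
  | cons b δ ih =>
    intro c hc
    have h1 : σ <+: c ++ [b] := hc.trans (List.prefix_append _ _)
    have h2 : (c ++ [b]).length ≤ (stp p c b).length := (hp1 _ h1).length_le
    have hσ : σ <+: stp p c b := hc.trans ((List.prefix_append _ _).trans (hp1 _ h1))
    have := ih (stp p c b) hσ
    simp only [List.length_append, List.length_singleton] at h2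
    simp only [List.length_cons, List.foldl_cons]
    omega

private lemma foldl_back : ∀ δ₁ δ₂ c, σ <+: c →
    List.foldl (stp p) c δ₁ <+: List.foldl (stp p) c δ₂ → δ₁ <+: δ₂ := by
  intro δ₁
  induction δ₁ with
  | nil => intro δ₂ c _ _; exact List.nil_prefix
  | cons a δ₁ ih =>
    intro δ₂ c hc h
    cases δ₂ with
    | nil =>
      exfalso
      have hlen := foldl_length σ p hp1 (a :: δ₁) c hc
      have := h.length_le
      simp only [List.foldl_nil, List.length_cons] at hlen this
      omega
    | cons b δ₂ =>
      simp only [List.foldl_cons] at h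
      have ha : σ <+: c ++ [a] := hc.trans (List.prefix_append _ _)
      have hb : σ <+: c ++ [b] := hc.trans (List.prefix_append _ _)
      have hσa : σ <+: stp p c a := hc.trans ((List.prefix_append _ _).trans (hp1 _ ha))
      have hσb : σ <+: stp p c b := hc.trans ((List.prefix_append _ _).trans (hp1 _ hb))
      -- c ++ [a] and c ++ [b] are both prefixes of the RHS
      have pa : c ++ [a] <+: List.foldl (stp p) (stp p c b) δ₂ :=
        ((hp1 _ ha).trans (foldl_prefix σ p hp1 δ₁ _ hσa).1).trans h
      have pb : c ++ [b] <+: List.foldl (stp p) (stp p c b) δ₂ :=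
        (hp1 _ hb).trans (foldl_prefix σ p hp1 δ₂ _ hσb).1
      have hab : a = b := by
        have := (List.prefix_of_prefix_length_le pa pb (by simp)).eq_of_length (by simp)
        simpa using this
      subst hab
      exact List.cons_prefix_cons.mpr ⟨rfl, ih δ₂ _ hσa h⟩

end Aux

/-- If `{τ : f τ = i}` is dense above `σ`, then there is an `H ≅ 2^{<ω}`
monochromatic for `f` with color `i`, all of whose elements extend `σ`. -/
theorem dense_gives_monochromatic (k : ℕ) (f : List Bool → ℕ)
    (hf : ∀ σ, f σ < k) (i : ℕ) (hi : i < k) (σ : List Bool)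
    (hdense : DenseAbove {τ | f τ = i} σ) :
    ∃ H : Set (List Bool), FullBinTreeIso H ∧ (∀ τ ∈ H, f τ = i) ∧
      ∀ τ ∈ H, σ <+: τ := by
  classical
  set p : List Bool → List Bool := fun τ =>
    if h : σ <+: τ then (hdense τ h).choose else τ with hp
  have hp1 : ∀ τ, σ <+: τ → τ <+: p τ := by
    intro τ h; simp only [hp, dif_pos h]; exact (hdense τ h).choose_spec.1
  have hp2 : ∀ τ, σ <+: τ → f (p τ) = i := by
    intro τ h; simp only [hp, dif_pos h]; exact (hdense τ h).choose_spec.2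
  set e : List Bool → List Bool := fun τ => List.foldl (stp p) (p σ) τ with he
  have hσp : σ <+: p σ := hp1 σ (List.prefix_refl σ)
  refine ⟨Set.range e, ⟨e, rfl, ?_⟩, ?_, ?_⟩
  · intro τ₁ τ₂
    constructor
    · intro h
      obtain ⟨δ, rfl⟩ := h
      simp only [he, List.foldl_append]
      exact (foldl_prefix σ p hp1 δ _ (hσp.trans
        (foldl_prefix σ p hp1 τ₁ _ hσp).1)).1
    · intro h
      exact foldl_back σ p hp1 τ₁ τ₂ (p σ) hσp h
  · rintro τ ⟨δ, rfl⟩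
    -- color: induction on δ showing f (e δ) = i
    have key : ∀ δ c, σ <+: c → f c = i → f (List.foldl (stp p) c δ) = i := by
      intro δ
      induction δ with
      | nil => intro c _ h; exact h
      | cons b δ ih =>
        intro c hc _
        have h1 : σ <+: c ++ [b] := hc.trans (List.prefix_append _ _)
        exact ih _ (hc.trans ((List.prefix_append _ _).trans (hp1 _ h1))) (hp2 _ h1)
    exact key δ (p σ) hσp (hp2 σ (List.prefix_refl σ))
  · rintro τ ⟨δ, rfl⟩
    exact hσp.trans (foldl_prefix σ p hp1 δ _ hσp).1
end

section
/- Let S ⊆ ω^{<ω} be a nonempty tree, and let R be the set of all binary strings of the form 0^{γ(0)} 1 0^{γ(1)} 1 ⋯ 0^{γ(|γ|−1)} 1 0^s for some γ ∈ S and some s ∈ ω (where 0^m denotes the string of m zeros). Then R is a nonempty tree contained in 2^{<ω}, the set of infinite paths [R] is nonempty, and [R] has cardinality 2^{ℵ₀} if and only if [S] has cardinality 2^{ℵ₀}. -/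
/-- The set of infinite paths through a set of finite strings over `α`. -/
def PathsThrough {α : Type*} (T : Set (List α)) : Set (ℕ → α) :=
  {p | ∀ n, (List.range n).map p ∈ T}

/-- The binary encoding `γ ↦ 0^{γ(0)} 1 0^{γ(1)} 1 ⋯ 0^{γ(|γ|−1)} 1` of a
finite string of natural numbers. -/
def code : List ℕ → List Bool
  | [] => []
  | a :: γ => List.replicate a false ++ [true] ++ code γ

namespace CodeTreeAux

open List

/-- A decoding function, inverse to `code` up to trailing zeros. -/
def decodeL : List Bool → List ℕ
  | [] => []
  | true :: σ => 0 :: decodeL σ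
  | false :: σ =>
    match decodeL σ with
    | [] => []
    | a :: γ => (a + 1) :: γ

lemma code_cons (a : ℕ) (γ : List ℕ) :
    code (a :: γ) = List.replicate a false ++ true :: code γ := by
  simp [code]

lemma code_append (γ δ : List ℕ) : code (γ ++ δ) = code γ ++ code δ := by
  induction γ with
  | nil => simp [code]
  | cons a γ ih => simp [code, ih]

lemma code_length (γ : List ℕ) : (code γ).length = γ.sum + γ.length := by
  induction γ with
  | nil => simp [code]
  | cons a γ ih => simp [code, ih]; omega

lemma decodeL_replicate (s : ℕ) : decodeL (List.replicate s false) = [] := by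
  induction s with
  | zero => rfl
  | succ s ih =>
    rw [List.replicate_succ]
    show (match decodeL (List.replicate s false) with
      | [] => ([] : List ℕ) | a :: γ => (a + 1) :: γ) = []
    rw [ih]

lemma decodeL_replicate_append (a : ℕ) {σ : List Bool} {b : ℕ} {δ : List ℕ}
    (h : decodeL σ = b :: δ) :
    decodeL (List.replicate a false ++ σ) = (a + b) :: δ := by
  induction a with
  | zero => simpa using h
  | succ a ih =>
    rw [List.replicate_succ, List.cons_append]
    show (match decodeL (List.replicate a false ++ σ) with
      | [] => [] | a :: γ => (a + 1) :: γ) = _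
    rw [ih]
    simp [Nat.succ_add, Nat.add_comm, Nat.add_left_comm]

lemma decodeL_code (γ : List ℕ) (s : ℕ) :
    decodeL (code γ ++ List.replicate s false) = γ := by
  induction γ with
  | nil => simpa [code] using decodeL_replicate s
  | cons a γ ih =>
    have h : decodeL (true :: (code γ ++ List.replicate s false)) = 0 :: γ := by
      show 0 :: decodeL (code γ ++ List.replicate s false) = 0 :: γ
      rw [ih]
    rw [code_cons, List.append_assoc, List.cons_append, decodeL_replicate_append a h]
    simp

lemma decodeL_code' (γ : List ℕ) : decodeL (code γ) = γ := by
  simpa using decodeL_code γ 0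

lemma code_injective : Function.Injective code := fun γ δ h => by
  rw [← decodeL_code' γ, ← decodeL_code' δ, h]

lemma prefix_replicate {σ : List Bool} {s : ℕ} (h : σ <+: List.replicate s false) :
    σ = List.replicate σ.length false :=
  List.eq_replicate_iff.2 ⟨rfl, fun b hb => List.eq_of_mem_replicate (h.subset hb)⟩

lemma prefix_append_cases {α : Type*} {σ τ ρ : List α} (h : σ <+: τ ++ ρ) :
    σ <+: τ ∨ ∃ σ', σ = τ ++ σ' ∧ σ' <+: ρ := by
  rcases List.prefix_or_prefix_of_prefix h (List.prefix_append τ ρ) with h1 | h1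
  · exact Or.inl h1
  · obtain ⟨σ', rfl⟩ := h1
    exact Or.inr ⟨σ', rfl, (List.prefix_append_right_inj τ).mp h⟩

lemma prefix_code {σ : List Bool} {γ : List ℕ} (h : σ <+: code γ) :
    ∃ γ' s, γ' <+: γ ∧ σ = code γ' ++ List.replicate s false := by
  induction γ generalizing σ with
  | nil =>
    refine ⟨[], 0, List.prefix_refl _, ?_⟩
    have : σ = [] := List.prefix_nil.mp (by simpa [code] using h)
    simp [this, code]
  | cons a γ ih =>
    rw [code_cons] at h
    rcases prefix_append_cases h with h1 | ⟨σ', rfl, h1⟩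
    · exact ⟨[], σ.length, List.nil_prefix, by simpa [code] using prefix_replicate h1⟩
    · match σ', h1 with
      | [], _ => exact ⟨[], a, List.nil_prefix, by simp [code]⟩
      | true :: σ'', h1 =>
        obtain ⟨γ', s, hpre, rfl⟩ := ih ((List.cons_prefix_cons.mp h1).2)
        exact ⟨a :: γ', s, List.cons_prefix_cons.mpr ⟨rfl, hpre⟩, by
          simp [code_cons, List.append_assoc]⟩
      | false :: σ'', h1 =>
        exact absurd (List.cons_prefix_cons.mp h1).1 (by simp)

lemma code_prefix_code {γ δ : List ℕ} (h : code γ <+: code δ) : γ <+: δ := by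
  obtain ⟨γ', s, hpre, heq⟩ := prefix_code h
  have : γ = γ' := by
    have := decodeL_code γ' s
    rw [← heq, decodeL_code'] at this
    exact this
  exact this ▸ hpre

lemma code_mono {γ δ : List ℕ} (h : γ <+: δ) : code γ <+: code δ := by
  obtain ⟨ρ, rfl⟩ := h
  rw [code_append]
  exact List.prefix_append _ _

/-- The encoding of an infinite path. -/
def encodeP (p : ℕ → ℕ) : ℕ → Bool :=
  fun n => (code ((List.range (n + 1)).map p)).getD n false

lemma length_code_range (p : ℕ → ℕ) (n : ℕ) :
    n ≤ (code ((List.range n).map p)).length := by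
  rw [code_length]
  simp [Nat.le_add_left]

lemma range_map_prefix {α : Type*} (p : ℕ → α) {m n : ℕ} (h : m ≤ n) :
    (List.range m).map p <+: (List.range n).map p := by
  obtain ⟨k, rfl⟩ := Nat.exists_eq_add_of_le h
  rw [List.range_add, List.map_append]
  exact List.prefix_append _ _

lemma encodeP_spec (p : ℕ → ℕ) (n : ℕ) :
    (List.range n).map (encodeP p) = (code ((List.range n).map p)).take n := by
  have hlen := length_code_range p n
  apply List.ext_getElem
  · simp only [List.length_map, List.length_range, List.length_take]
    omega
  · intro k h1 h2
    simp only [List.length_map, List.length_range] at h1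
    simp only [List.getElem_map, List.getElem_range, List.getElem_take]
    show (code ((List.range (k + 1)).map p)).getD k false = _
    have hpre : code ((List.range (k + 1)).map p) <+: code ((List.range n).map p) :=
      code_mono (range_map_prefix p h1)
    have hk : k < (code ((List.range (k + 1)).map p)).length :=
      lt_of_lt_of_le (Nat.lt_succ_self k) (length_code_range p (k + 1))
    rw [List.getD_eq_getElem _ _ hk]
    exact hpre.getElem hk

lemma encodeP_recover (p : ℕ → ℕ) (N : ℕ) :
    (List.range ((code ((List.range N).map p)).length)).map (encodeP p)
      = code ((List.range N).map p) := by
  rw [encodeP_spec]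
  have hpre : code ((List.range N).map p)
      <+: code ((List.range ((code ((List.range N).map p)).length)).map p) :=
    code_mono (range_map_prefix p (length_code_range p N))
  exact (List.prefix_iff_eq_take.mp hpre).symm

lemma encodeP_injective : Function.Injective encodeP := by
  intro p p' h
  have key : ∀ N, (List.range N).map p = (List.range N).map p' := by
    intro N
    have h1 := encodeP_recover p N
    have h2 := encodeP_recover p' N
    rw [h] at h1
    have hcp : code ((List.range N).map p) <+: code ((List.range N).map p')
        ∨ code ((List.range N).map p') <+: code ((List.range N).map p) := by
      rcases le_total (code ((List.range N).map p)).length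
          (code ((List.range N).map p')).length with hle | hle
      · left; rw [← h1, ← h2]; exact range_map_prefix _ hle
      · right; rw [← h1, ← h2]; exact range_map_prefix _ hle
    rcases hcp with hc | hc
    · exact (code_prefix_code hc).eq_of_length (by simp)
    · exact ((code_prefix_code hc).eq_of_length (by simp)).symm
  funext n
  have h3 := key (n + 1)
  have h4 : ((List.range (n + 1)).map p)[n]'(by simp)
      = ((List.range (n + 1)).map p')[n]'(by simp) := List.getElem_of_eq h3 _
  simpa using h4

/-! ### Decoding infinite paths -/

/-- Position of the `i`-th `true` in `q`. -/
noncomputable def tt (q : ℕ → Bool) (i : ℕ) : ℕ := Nat.nth (fun n => q n = true) i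

/-- Start of the `n`-th block. -/
noncomputable def uu (q : ℕ → Bool) : ℕ → ℕ
  | 0 => 0
  | n + 1 => tt q n + 1

/-- The decoded path. -/
noncomputable def decP (q : ℕ → Bool) (i : ℕ) : ℕ := tt q i - uu q i

variable {q : ℕ → Bool} (hinf : {n | q n = true}.Infinite)

include hinf

lemma tt_lt_tt {m n : ℕ} (h : m < n) : tt q m < tt q n :=
  (Nat.nth_lt_nth hinf).mpr h

lemma tt_le_tt {m n : ℕ} (h : m ≤ n) : tt q m ≤ tt q n :=
  (Nat.nth_le_nth hinf).mpr h

lemma le_tt (n : ℕ) : n ≤ tt q n :=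
  Nat.le_nth (fun hf => (hinf hf).elim)

lemma uu_le_tt : ∀ n, uu q n ≤ tt q n
  | 0 => Nat.zero_le _
  | n + 1 => tt_lt_tt hinf (Nat.lt_succ_self n)

lemma q_tt (n : ℕ) : q (tt q n) = true :=
  Nat.nth_mem_of_infinite hinf n

lemma q_false_between {n k : ℕ} (h1 : uu q n ≤ k) (h2 : k < tt q n) : q k = false := by
  by_contra hne
  have hk : q k = true := by
    cases hq : q k
    · exact absurd hq hne
    · rfl
  have hcnt : tt q (Nat.count (fun n => q n = true) k) = k := Nat.nth_count hk
  set m := Nat.count (fun n => q n = true) k with hm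
  have hmn : m < n := by
    by_contra hge
    push_neg at hge
    have : tt q n ≤ tt q m := tt_le_tt hinf hge
    omega
  cases n with
  | zero => omega
  | succ n' =>
    have h3 : tt q m ≤ tt q n' := tt_le_tt hinf (by omega)
    have h4 : uu q (n' + 1) = tt q n' + 1 := rfl
    omega

lemma decode_main : ∀ n, (List.range (uu q n)).map q = code ((List.range n).map (decP q)) := by
  intro n
  induction n with
  | zero => rfl
  | succ n ih =>
    have hu : uu q n ≤ tt q n := uu_le_tt hinf n
    have hsplit : uu q (n + 1) = uu q n + (decP q n + 1) := by
      show tt q n + 1 = _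
      unfold decP
      omega
    rw [hsplit, List.range_add, List.map_append, List.map_map, ih]
    conv_rhs => rw [List.range_succ, List.map_append, code_append]
    congr 1
    simp only [List.map_cons, List.map_nil]
    have hcode : code [decP q n] = List.replicate (decP q n) false ++ [true] := by
      simp [code]
    rw [hcode]
    apply List.ext_getElem
    · simp
    · intro k hk1 hk2
      simp only [List.length_map, List.length_range] at hk1
      simp only [List.getElem_map, List.getElem_range, Function.comp_apply]
      rcases lt_or_eq_of_le (Nat.lt_succ_iff.mp hk1) with hlt | heq
      · have hfalse : q (uu q n + k) = false := by
          apply q_false_between hinf (Nat.le_add_right _ _)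
          unfold decP at hlt
          omega
        rw [List.getElem_append_left (by simpa using hlt), List.getElem_replicate]
        exact hfalse
      · have htn : uu q n + k = tt q n := by
          unfold decP at heq
          omega
        rw [htn, q_tt hinf]
        rw [List.getElem_append_right (by simp [heq])]
        simp [heq]

lemma decP_recover : q = encodeP (decP q) := by
  funext k
  have h1 := decode_main hinf (k + 1)
  have hk : k < uu q (k + 1) := by
    have := le_tt hinf k
    show k < tt q k + 1
    omega
  have hlen : k < ((List.range (uu q (k + 1))).map q).length := by simpa using hk
  have h2 : ((List.range (uu q (k + 1))).map q)[k]'hlen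
      = (code ((List.range (k + 1)).map (decP q)))[k]'(h1 ▸ hlen) :=
    List.getElem_of_eq h1 _
  simp only [List.getElem_map, List.getElem_range] at h2
  rw [h2]
  show _ = (code ((List.range (k + 1)).map (decP q))).getD k false
  rw [List.getD_eq_getElem _ _ (h1 ▸ hlen)]

end CodeTreeAux

/-- For a nonempty tree `S ⊆ ω^{<ω}`, the set
`R = {0^{γ(0)} 1 ⋯ 0^{γ(|γ|−1)} 1 0^s : γ ∈ S, s ∈ ω}` is a nonempty subtree
of `2^{<ω}`, `[R]` is nonempty, and `|[R]| = 2^ℵ₀` iff `|[S]| = 2^ℵ₀`. -/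
theorem code_tree_properties (S : Set (List ℕ)) (hS : S.Nonempty)
    (htree : ∀ α β : List ℕ, α <+: β → β ∈ S → α ∈ S) :
    let R : Set (List Bool) :=
      {σ | ∃ γ ∈ S, ∃ s : ℕ, σ = code γ ++ List.replicate s false}
    R.Nonempty ∧ (∀ σ τ : List Bool, σ <+: τ → τ ∈ R → σ ∈ R) ∧
      (PathsThrough R).Nonempty ∧
      (Cardinal.mk ↥(PathsThrough R) = 2 ^ Cardinal.aleph0 ↔
        Cardinal.mk ↥(PathsThrough S) = 2 ^ Cardinal.aleph0) := by
  classical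
  intro R
  have hnilS : [] ∈ S := by
    obtain ⟨γ, hγ⟩ := hS
    exact htree [] γ List.nil_prefix hγ
  have hRne : R.Nonempty := ⟨[], [], hnilS, 0, by simp [code]⟩
  have hRtree : ∀ σ τ : List Bool, σ <+: τ → τ ∈ R → σ ∈ R := by
    rintro σ τ hpre ⟨γ, hγ, s, rfl⟩
    rcases CodeTreeAux.prefix_append_cases hpre with h1 | ⟨σ', rfl, h1⟩
    · obtain ⟨γ', s', hp, rfl⟩ := CodeTreeAux.prefix_code h1
      exact ⟨γ', htree γ' γ hp hγ, s', rfl⟩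
    · have h2 := CodeTreeAux.prefix_replicate h1
      exact ⟨γ, hγ, σ'.length, by rw [h2]; simp⟩
  have hpaths : (PathsThrough R).Nonempty := by
    refine ⟨fun _ => false, fun n => ⟨[], hnilS, n, ?_⟩⟩
    simp [code, List.map_eq_replicate_iff]
  refine ⟨hRne, hRtree, hpaths, ?_⟩
  have hSle : Cardinal.mk ↥(PathsThrough S) ≤ 2 ^ Cardinal.aleph0 := by
    calc Cardinal.mk ↥(PathsThrough S) ≤ Cardinal.mk (ℕ → ℕ) := Cardinal.mk_set_le _
      _ = (Cardinal.mk ℕ) ^ (Cardinal.mk ℕ) := (Cardinal.power_def ℕ ℕ).symm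
      _ = 2 ^ Cardinal.aleph0 := by
        rw [Cardinal.mk_nat]
        exact Cardinal.power_self_eq le_rfl
  have hRle : Cardinal.mk ↥(PathsThrough R) ≤ 2 ^ Cardinal.aleph0 := by
    calc Cardinal.mk ↥(PathsThrough R) ≤ Cardinal.mk (ℕ → Bool) := Cardinal.mk_set_le _
      _ = (Cardinal.mk Bool) ^ (Cardinal.mk ℕ) := (Cardinal.power_def Bool ℕ).symm
      _ = 2 ^ Cardinal.aleph0 := by rw [Cardinal.mk_bool, Cardinal.mk_nat]
  have hSR : Cardinal.mk ↥(PathsThrough S) ≤ Cardinal.mk ↥(PathsThrough R) := by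
    have hmem : ∀ p ∈ PathsThrough S, CodeTreeAux.encodeP p ∈ PathsThrough R := by
      intro p hp n
      rw [CodeTreeAux.encodeP_spec]
      exact hRtree _ _ (List.take_prefix _ _) ⟨_, hp n, 0, by simp⟩
    exact Cardinal.mk_le_of_injective
      (f := fun p : ↥(PathsThrough S) =>
        (⟨CodeTreeAux.encodeP p.1, hmem p.1 p.2⟩ : ↥(PathsThrough R)))
      (fun p p' h => Subtype.ext (CodeTreeAux.encodeP_injective (congrArg Subtype.val h)))
  have hdecS : ∀ q ∈ PathsThrough R, (hinf : {n | q n = true}.Infinite) →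
      CodeTreeAux.decP q ∈ PathsThrough S := by
    intro q hq hinf n
    have h1 := CodeTreeAux.decode_main hinf n
    obtain ⟨γ, hγ, s, heq⟩ := hq (CodeTreeAux.uu q n)
    rw [heq] at h1
    have : (List.range n).map (CodeTreeAux.decP q) = γ := by
      rw [← CodeTreeAux.decodeL_code' ((List.range n).map (CodeTreeAux.decP q)), ← h1,
        CodeTreeAux.decodeL_code]
    rw [this]
    exact hγ
  have hRS : Cardinal.mk ↥(PathsThrough R)
      ≤ Cardinal.mk ↥(PathsThrough S) + Cardinal.aleph0 := by
    have hex : ∀ q : ↥(PathsThrough R), ¬ {n | q.1 n = true}.Infinite →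
        ∃ N, ∀ n, N ≤ n → q.1 n = false := by
      intro q h
      obtain ⟨N, hN⟩ := (Set.not_infinite.mp h).bddAbove
      refine ⟨N + 1, fun n hn => ?_⟩
      cases hq : q.1 n
      · rfl
      · exact absurd (hN hq) (by omega)
    set Φ : ↥(PathsThrough R) → ↥(PathsThrough S) ⊕ List Bool := fun q =>
      if h : {n | q.1 n = true}.Infinite then
        Sum.inl ⟨CodeTreeAux.decP q.1, hdecS q.1 q.2 h⟩
      else Sum.inr ((List.range (Nat.find (hex q h))).map q.1) with hΦ
    have hΦinj : Function.Injective Φ := by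
      intro q q' heq
      by_cases h1 : {n | q.1 n = true}.Infinite <;>
        by_cases h2 : {n | q'.1 n = true}.Infinite <;>
          rw [hΦ] at heq <;> simp only [dif_pos, dif_neg, h1, h2] at heq
      · have h3 : CodeTreeAux.decP q.1 = CodeTreeAux.decP q'.1 := by
          have := Sum.inl.inj heq
          exact congrArg Subtype.val this
        apply Subtype.ext
        rw [CodeTreeAux.decP_recover h1, CodeTreeAux.decP_recover h2, h3]
      · exact absurd heq (by simp)
      · exact absurd heq (by simp)
      · have heq' := Sum.inr.inj heq
        have hNeq : Nat.find (hex q h1) = Nat.find (hex q' h2) := by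
          have := congrArg List.length heq'
          simpa using this
        apply Subtype.ext
        funext n
        rcases lt_or_ge n (Nat.find (hex q h1)) with hn | hn
        · have h4 : ((List.range (Nat.find (hex q h1))).map q.1)[n]'(by simpa using hn)
              = ((List.range (Nat.find (hex q' h2))).map q'.1)[n]'(by simp [← hNeq, hn]) :=
            List.getElem_of_eq heq' _
          simpa using h4
        · rw [Nat.find_spec (hex q h1) n hn, Nat.find_spec (hex q' h2) n (hNeq ▸ hn)]
    calc Cardinal.mk ↥(PathsThrough R) ≤ Cardinal.mk (↥(PathsThrough S) ⊕ List Bool) :=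
          Cardinal.mk_le_of_injective hΦinj
      _ = Cardinal.mk ↥(PathsThrough S) + Cardinal.mk (List Bool) := by
          simp [Cardinal.mk_sum]
      _ = Cardinal.mk ↥(PathsThrough S) + Cardinal.aleph0 := by
          rw [Cardinal.mk_list_eq_aleph0]
  constructor
  · intro hR
    refine le_antisymm hSle ?_
    by_contra hlt
    rw [not_le] at hlt
    have hsum : Cardinal.mk ↥(PathsThrough S) + Cardinal.aleph0 < 2 ^ Cardinal.aleph0 :=
      Cardinal.add_lt_of_lt (Cardinal.cantor _).le hlt (Cardinal.cantor _)
    exact absurd (hR ▸ hRS) hsum.not_ge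
  · intro hSeq
    exact le_antisymm hRle (hSeq ▸ hSR)
end

section
/- Let f : 2^{<ω} → ω be any coloring, let C ⊆ ω be a nonempty finite set, and let σ ∈ 2^{<ω}. Then there exist a set W ⊆ C and a string τ ⪰ σ such that: for each c ∈ C \ W, the set {ρ ∈ 2^{<ω} : f(ρ) = c} is dense above τ; and f(ρ) ∉ W for all ρ ⪰ τ. -/
lemma exists_dense_aux (f : List Bool → ℕ) :
    ∀ n (C : Finset ℕ), C.card ≤ n → ∀ σ : List Bool,
    ∃ W : Finset ℕ, W ⊆ C ∧ ∃ τ : List Bool, σ <+: τ ∧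
      (∀ c ∈ C \ W, DenseAbove {ρ | f ρ = c} τ) ∧
      (∀ ρ, τ <+: ρ → f ρ ∉ W) := by
  intro n
  induction n with
  | zero =>
    intro C hcard σ
    refine ⟨∅, Finset.empty_subset _, σ, List.prefix_rfl, ?_, ?_⟩
    · intro c hc
      simp [Finset.card_eq_zero.mp (Nat.le_zero.mp hcard)] at hc
    · simp
  | succ n ih =>
    intro C hcard σ
    by_cases h : ∀ c ∈ C, DenseAbove {ρ | f ρ = c} σ
    · exact ⟨∅, Finset.empty_subset _, σ, List.prefix_rfl, fun c hc =>
        h c (Finset.mem_sdiff.mp hc).1, by simp⟩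
    · push_neg at h
      obtain ⟨c, hcC, hnd⟩ := h
      unfold DenseAbove at hnd
      push_neg at hnd
      obtain ⟨τ, hστ, hτ⟩ := hnd
      have hcard' : (C.erase c).card ≤ n := by
        have := Finset.card_erase_of_mem hcC
        omega
      obtain ⟨W', hW'sub, τ', hττ', hdense, hnocc⟩ := ih (C.erase c) hcard' τ
      refine ⟨insert c W', ?_, τ', hστ.trans hττ', ?_, ?_⟩
      · exact Finset.insert_subset hcC (hW'sub.trans (Finset.erase_subset _ _))
      · intro d hd
        rw [Finset.mem_sdiff, Finset.mem_insert] at hd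
        push_neg at hd
        exact hdense d (Finset.mem_sdiff.mpr ⟨Finset.mem_erase.mpr ⟨hd.2.1, hd.1⟩, hd.2.2⟩)
      · intro ρ hρ
        rw [Finset.mem_insert]
        push_neg
        refine ⟨?_, hnocc ρ hρ⟩
        exact hτ ρ (hττ'.trans hρ)

/-- For any coloring `f : 2^{<ω} → ω`, nonempty finite `C ⊆ ω`, and
`σ ∈ 2^{<ω}`, there are `W ⊆ C` and `τ ⪰ σ` such that each color in `C \ W`
is dense above `τ`, and no color in `W` occurs on any extension of `τ`. -/
theorem exists_dense_set_of_colors (f : List Bool → ℕ) (C : Finset ℕ)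
    (hC : C.Nonempty) (σ : List Bool) :
    ∃ W : Finset ℕ, W ⊆ C ∧ ∃ τ : List Bool, σ <+: τ ∧
      (∀ c ∈ C \ W, DenseAbove {ρ | f ρ = c} τ) ∧
      (∀ ρ, τ <+: ρ → f ρ ∉ W) := by
  exact exists_dense_aux f C.card C le_rfl σ
end

section
/- Let f : 2^{<ω} → ω be a coloring with finite range. Then there exist a nonempty finite set C ⊆ ω and a good C-rake R for f of height ω. -/
/-- Strict prefix of binary strings. -/
def SPre (σ τ : List Bool) : Prop := σ <+: τ ∧ σ ≠ τ

/-- The rank of `σ` in `S ⊆ 2^{<ω}`: the number of strict prefixes of `σ`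
belonging to `S` (always a finite set). -/
noncomputable def rk (S : Set (List Bool)) (σ : List Bool) : ℕ :=
  {τ ∈ S | SPre τ σ}.ncard

/-- `τ` is a successor of `σ` in `S`: both lie in `S`, `σ ≺ τ`, and the rank
of `τ` in `S` is one more than that of `σ`. -/
def SuccIn (S : Set (List Bool)) (σ τ : List Bool) : Prop :=
  σ ∈ S ∧ τ ∈ S ∧ SPre σ τ ∧ rk S τ = rk S σ + 1

/-- `σ` is a leaf of `S`: it lies in `S` and has no successor in `S`. -/
def IsLeaf (S : Set (List Bool)) (σ : List Bool) : Prop :=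
  σ ∈ S ∧ ∀ τ, ¬ SuccIn S σ τ

/-- `S` is rooted: it has a unique element of rank `0`. -/
def Rooted (S : Set (List Bool)) : Prop :=
  ∃! ρ, ρ ∈ S ∧ rk S ρ = 0

/-- `S` is symmetric: elements of equal rank have the same number of
successors in `S`. -/
def SymmTree (S : Set (List Bool)) : Prop :=
  ∀ σ ∈ S, ∀ τ ∈ S, rk S σ = rk S τ →
    Cardinal.mk {ρ : List Bool // SuccIn S σ ρ} =
      Cardinal.mk {ρ : List Bool // SuccIn S τ ρ}

/-- The height of `S ⊆ 2^{<ω}`, as an extended natural number: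
`sup {rk_S(σ) + 1 : σ ∈ S}`. -/
noncomputable def htSet (S : Set (List Bool)) : ℕ∞ :=
  ⨆ σ ∈ S, ((rk S σ : ℕ∞) + 1)

/-- `R` is a `C`-rake for the coloring `f`: `R` is rooted and symmetric; an
element of rank `≡ i (mod |C|)` gets the `i`-th smallest color of `C` under
`f`; elements of rank `≢ |C|−1 (mod |C|)` have exactly one successor; and
elements of rank `≡ |C|−1 (mod |C|)` have `0` or `|C|+1` successors. -/
def IsRake (f : List Bool → ℕ) (C : Finset ℕ) (R : Set (List Bool)) : Prop :=
  Rooted R ∧ SymmTree R ∧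
  (∀ σ ∈ R, f σ = (C.sort (· ≤ ·)).getD (rk R σ % C.card) 0) ∧
  (∀ σ ∈ R, rk R σ % C.card ≠ C.card - 1 → ∃! τ, SuccIn R σ τ) ∧
  (∀ σ ∈ R, rk R σ % C.card = C.card - 1 →
    (∀ τ, ¬ SuccIn R σ τ) ∨
    ({τ | SuccIn R σ τ}.Finite ∧ {τ | SuccIn R σ τ}.ncard = C.card + 1))

/-- A `C`-rake is good if every string extending its root is colored in `C`. -/
def GoodRake (f : List Bool → ℕ) (C : Finset ℕ) (R : Set (List Bool)) : Prop :=
  IsRake f C R ∧ ∀ ρ, ρ ∈ R → rk R ρ = 0 → ∀ σ, ρ <+: σ → f σ ∈ C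

/-- `S ≅ 2^{<n}` for `n ∈ ω ∪ {ω}` (with `2^{<ω}` the case `n = ⊤`): there is
a map from the binary strings of length `< n` onto `S` preserving and
reflecting the prefix relation. -/
def IsoLt (n : ℕ∞) (S : Set (List Bool)) : Prop :=
  ∃ e : {σ : List Bool // (σ.length : ℕ∞) < n} → List Bool,
    Set.range e = S ∧ ∀ σ τ, σ.1 <+: τ.1 ↔ e σ <+: e τ

/-- `S ⊴ R` (for a `C`-rake `R`): `S ⊆ R`; `S ≅ 2^{<n}` for some `n ≤ ht(R)`;
`rk_S(σ) = bl_R(σ) = ⌊rk_R(σ)/|C|⌋` for all `σ ∈ S`; and all elements of `S`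
have the same rank in `R` modulo `|C|`. -/
def SubRake (C : Finset ℕ) (R S : Set (List Bool)) : Prop :=
  S ⊆ R ∧ (∃ n : ℕ∞, n ≤ htSet R ∧ IsoLt n S) ∧
  (∀ σ ∈ S, rk S σ = rk R σ / C.card) ∧
  (∀ σ ∈ S, ∀ τ ∈ S, rk R σ % C.card = rk R τ % C.card)

/-- `S^{rk<n}`: the elements of `S` of rank less than `n` in `S`. -/
def rkLt (S : Set (List Bool)) (n : ℕ) : Set (List Bool) :=
  {σ ∈ S | rk S σ < n}

namespace RakeAux

lemma spre_iff {a b : List Bool} : SPre a b ↔ a <+: b ∧ a.length < b.length := by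
  constructor
  · rintro ⟨h, hne⟩
    refine ⟨h, ?_⟩
    rcases h.length_le.lt_or_eq with h2 | h2
    · exact h2
    · exact absurd (h.eq_of_length h2) hne
  · rintro ⟨h, hlt⟩
    exact ⟨h, fun he => by simp [he] at hlt⟩

lemma spre_trans_left {a b c : List Bool} (h : a <+: b) (h2 : SPre b c) : SPre a c := by
  rw [spre_iff] at h2 ⊢
  exact ⟨h.trans h2.1, lt_of_le_of_lt h.length_le h2.2⟩

lemma spre_trans_right {a b c : List Bool} (h : SPre a b) (h2 : b <+: c) : SPre a c := by
  rw [spre_iff] at h ⊢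
  exact ⟨h.1.trans h2, lt_of_lt_of_le h.2 h2.length_le⟩

/-- Pairwise-incomparable marker strings. -/
def wstr (j : ℕ) : List Bool := List.replicate j true ++ [false]

lemma wstr_ne_nil (j : ℕ) : wstr j ≠ [] := by simp [wstr]

lemma wstr_prefix {j j' : ℕ} (h : wstr j <+: wstr j') : j = j' := by
  induction j generalizing j' with
  | zero =>
    cases j' with
    | zero => rfl
    | succ m =>
      simp only [wstr, List.replicate_succ, List.replicate_zero, List.nil_append,
        List.cons_append, List.cons_prefix_cons] at h
      exact absurd h.1 (by simp)
  | succ n ih =>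
    cases j' with
    | zero =>
      simp only [wstr, List.replicate_succ, List.replicate_zero, List.nil_append,
        List.cons_append, List.cons_prefix_cons] at h
      exact absurd h.1 (by simp)
    | succ m =>
      simp only [wstr, List.replicate_succ, List.cons_append, List.cons_prefix_cons] at h
      have := ih (j' := m) (by simpa [wstr] using h.2)
      omega

section Tree

variable (k : ℕ) (pick : List Bool → ℕ → List Bool) (root : List Bool)

/-- The spine above `s`: iterated applications of `pick`. -/
def spine (s : List Bool) : ℕ → List Bool
  | 0 => pick s 0
  | i + 1 => pick (spine s i) (i + 1)

/-- The starting string of the spine indexed by the branch path `b`. -/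
def rstart : List (Fin (k + 1)) → List Bool
  | [] => root
  | j :: b => spine pick (rstart b) (k - 1) ++ wstr j.val

/-- The `i`-th node of the spine indexed by branch path `b`. -/
def node (b : List (Fin (k + 1))) (i : ℕ) : List Bool := spine pick (rstart k pick root b) i

/-- The rake set. -/
def RSet : Set (List Bool) := {x | ∃ b i, i < k ∧ x = node k pick root b i}

end Tree

section TreeLemmas

variable {k : ℕ} {pick : List Bool → ℕ → List Bool} {root : List Bool}
variable (hp : ∀ s i, SPre s (pick s i))

include hp

lemma spine_spre (s : List Bool) (i : ℕ) : SPre s (spine pick s i) := by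
  induction i with
  | zero => exact hp s 0
  | succ n ihn => exact spre_trans_right ihn (hp _ _).1

lemma spine_spre_lt (s : List Bool) {i i' : ℕ} (h : i < i') :
    SPre (spine pick s i) (spine pick s i') := by
  induction i' with
  | zero => omega
  | succ n ihn =>
    rcases Nat.lt_succ_iff_lt_or_eq.1 h with h2 | h2
    · exact spre_trans_right (ihn h2) (hp _ _).1
    · subst h2; exact hp _ _

lemma spine_mono (s : List Bool) {i i' : ℕ} (h : i ≤ i') :
    spine pick s i <+: spine pick s i' := by
  rcases h.lt_or_eq with h2 | h2
  · exact (spine_spre_lt hp s h2).1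
  · subst h2; rfl

lemma spine_le_of_prefix {s : List Bool} {i i' : ℕ}
    (h : spine pick s i <+: spine pick s i') : i ≤ i' := by
  by_contra hc
  push_neg at hc
  have h2 := spine_spre_lt hp s hc
  rw [spre_iff] at h2
  have := h.length_le
  omega

lemma start_prefix_node (b : List (Fin (k + 1))) (i : ℕ) :
    SPre (rstart k pick root b) (node k pick root b i) := spine_spre hp _ i

lemma start_mono {d b : List (Fin (k + 1))} (h : d <:+ b) :
    rstart k pick root d <+: rstart k pick root b := by
  induction b with
  | nil => rw [List.suffix_nil.1 h]
  | cons j c ihc =>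
    rcases List.suffix_cons_iff.1 h with h2 | h2
    · rw [h2]
    · refine (ihc h2).trans ?_
      exact ((spine_spre hp _ (k-1)).1).trans (List.prefix_append _ _)

lemma node_spre_start {d b : List (Fin (k + 1))} (h : d <:+ b) (hne : d ≠ b) {i : ℕ}
    (hi : i ≤ k - 1) : SPre (node k pick root d i) (rstart k pick root b) := by
  induction b with
  | nil => exact absurd (List.suffix_nil.1 h) hne
  | cons j c ihc =>
    rcases List.suffix_cons_iff.1 h with h2 | h2
    · exact absurd h2 hne
    · rcases eq_or_ne d c with h3 | h3
      · subst h3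
        refine spre_trans_left (spine_mono hp _ hi) (show SPre _ (rstart k pick root (j :: d)) from ?_)
        rw [rstart]
        exact spre_iff.2 ⟨List.prefix_append _ _, by simp [wstr]⟩
      · refine spre_trans_right (spre_trans_right (ihc h2 h3)
          ((spine_spre hp _ (k-1)).1)) (show _ <+: rstart k pick root (j :: c) from ?_)
        rw [rstart]
        exact List.prefix_append _ _

lemma node_prefix_node {d b : List (Fin (k + 1))} (h : d <:+ b) {i i' : ℕ}
    (hi : i ≤ k - 1) (hii : d = b → i ≤ i') :
    node k pick root d i <+: node k pick root b i' := by
  rcases eq_or_ne d b with h2 | h2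
  · subst h2; exact spine_mono hp _ (hii rfl)
  · exact ((node_spre_start hp h h2 hi).1).trans (spine_spre hp _ _).1

lemma node_spre_node {d b : List (Fin (k + 1))} (h : d <:+ b) (hne : d ≠ b) {i i' : ℕ}
    (hi : i ≤ k - 1) : SPre (node k pick root d i) (node k pick root b i') :=
  spre_trans_right (node_spre_start hp h hne hi) (spine_spre hp _ _).1

omit hp in
lemma suffix_cons_of_proper {d b : List (Fin (k + 1))} (h : d <:+ b) (hne : d ≠ b) :
    ∃ j : Fin (k + 1), (j :: d) <:+ b := by
  obtain ⟨t, rfl⟩ := h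
  have ht : t ≠ [] := by rintro rfl; simp at hne
  rcases List.eq_nil_or_concat t with h1 | ⟨t₀, j, rfl⟩
  · exact absurd h1 ht
  · exact ⟨j, ⟨t₀, by simp⟩⟩

omit hp in
lemma rstart_cons (j : Fin (k+1)) (b : List (Fin (k+1))) :
    rstart k pick root (j :: b) = node k pick root b (k-1) ++ wstr j.val := rfl

omit hp in
lemma length_lt_of_wstr_prefix {a c : List Bool} {x : ℕ} (h : a ++ wstr x <+: c) :
    a.length < c.length := by
  have := h.length_le
  simp only [List.length_append, wstr, List.length_replicate, List.length_cons,
    List.length_nil] at this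
  omega

/-- Main reflection lemma. -/
lemma main_refl (hk : 0 < k) :
    ∀ n : ℕ,
      (∀ (b b' : List (Fin (k+1))) (i i' : ℕ), b.length + b'.length ≤ n → i < k → i' < k →
        node k pick root b' i' <+: node k pick root b i →
          b' <:+ b ∧ (b' = b → i' ≤ i)) ∧
      (∀ (b b' : List (Fin (k+1))) (i' : ℕ), b.length + b'.length ≤ n → i' < k →
        rstart k pick root b <+: node k pick root b' i' → b <:+ b') := by
  intro n
  induction n using Nat.strong_induction_on with
  | _ n IH =>
    -- clause (2) at level n, using clause (1) at strictly smaller levels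
    have P2 : ∀ (b b' : List (Fin (k+1))) (i' : ℕ), b.length + b'.length ≤ n → i' < k →
        rstart k pick root b <+: node k pick root b' i' → b <:+ b' := by
      rintro b b' i' hlen hi' hpre
      cases b with
      | nil => exact List.nil_suffix
      | cons j d =>
        rw [rstart_cons] at hpre
        have hd : node k pick root d (k-1) <+: node k pick root b' i' :=
          (List.prefix_append _ _).trans hpre
        have hkk : k - 1 < k := Nat.sub_lt hk one_pos
        have hlen2 : b'.length + d.length < n := by simp at hlen; omega
        have h1 := (IH _ hlen2).1 b' d i' (k-1) le_rfl hi' hkk hd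
        rcases eq_or_ne d b' with h2 | h2
        · -- d = b' : length contradiction
          exfalso
          subst h2
          have hik : i' = k - 1 := by have := h1.2 rfl; omega
          subst hik
          exact lt_irrefl _ (length_lt_of_wstr_prefix hpre)
        · obtain ⟨j', hj'⟩ := suffix_cons_of_proper h1.1 h2
          have hstart : rstart k pick root (j' :: d) <+: node k pick root b' i' :=
            (start_mono hp hj').trans (spine_spre hp _ _).1
          rw [rstart_cons] at hstart
          have hcomp := List.prefix_or_prefix_of_prefix hstart hpre
          have hjj : j' = j := by
            rcases hcomp with h3 | h3
            · exact Fin.ext (wstr_prefix ((List.prefix_append_right_inj _).1 h3))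
            · exact (Fin.ext (wstr_prefix ((List.prefix_append_right_inj _).1 h3))).symm
          rw [← hjj]
          exact hj'
    refine ⟨?_, P2⟩
    rintro b b' i i' hlen hi hi' hpre
    have hkk : k - 1 < k := Nat.sub_lt hk one_pos
    cases b with
    | nil =>
      cases b' with
      | nil =>
        exact ⟨List.nil_suffix, fun _ => spine_le_of_prefix hp hpre⟩
      | cons j c =>
        exfalso
        have hc : node k pick root c (k-1) <+: node k pick root [] i := by
          refine ((node_spre_start hp ?_ ?_ (le_refl (k-1))).1.trans
            (spine_spre hp _ _).1).trans hpre
          · exact List.suffix_cons j c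
          · intro h; exact absurd (congrArg List.length h) (by simp)
        have hlen2 : ([] : List (Fin (k+1))).length + c.length < n := by
          simp at hlen ⊢; omega
        have h1 := (IH _ hlen2).1 [] c i (k-1) le_rfl hi hkk hc
        have hcnil : c = [] := List.suffix_nil.1 h1.1
        subst hcnil
        have hik : i = k - 1 := by have := h1.2 rfl; omega
        subst hik
        have hstart : rstart k pick root [j] <+: node k pick root [] (k-1) :=
          ((spine_spre hp _ _).1).trans hpre
        rw [rstart_cons] at hstart
        exact lt_irrefl _ (length_lt_of_wstr_prefix hstart)
    | cons j0 d =>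
      have hstartb : rstart k pick root (j0 :: d) <+: node k pick root (j0 :: d) i :=
        (spine_spre hp _ _).1
      rcases List.prefix_or_prefix_of_prefix hstartb hpre with hA | hB
      · -- Case A : rstart b <+: node b' i'
        have hsub : (j0 :: d) <:+ b' := P2 (j0 :: d) b' i' hlen hi' hA
        rcases eq_or_ne (j0 :: d) b' with h2 | h2
        · subst h2
          exact ⟨List.suffix_rfl, fun _ => spine_le_of_prefix hp hpre⟩
        · exfalso
          obtain ⟨j', hj'⟩ := suffix_cons_of_proper hsub h2
          have hstart2 : rstart k pick root (j' :: (j0 :: d)) <+: node k pick root (j0 :: d) i :=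
            ((start_mono hp hj').trans (spine_spre hp _ _).1).trans hpre
          rw [rstart_cons] at hstart2
          have h3 : node k pick root (j0 :: d) i <+: node k pick root (j0 :: d) (k-1) :=
            spine_mono hp _ (by omega)
          have l1 := length_lt_of_wstr_prefix hstart2
          have l2 := h3.length_le
          omega
      · -- Case B : node b' i' <+: rstart b
        have hBr := hB
        rw [rstart_cons] at hBr
        have hdpre : node k pick root d (k-1) <+: node k pick root d (k-1) ++ wstr j0.val :=
          List.prefix_append _ _
        rcases List.prefix_or_prefix_of_prefix hBr hdpre with hB1 | hB2
        · -- B1 : node b' i' <+: node d (k-1)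
          have hlen2 : d.length + b'.length < n := by simp at hlen; omega
          have h1 := (IH _ hlen2).1 d b' (k-1) i' le_rfl hkk hi' hB1
          have hsub : b' <:+ j0 :: d := h1.1.trans (List.suffix_cons j0 d)
          refine ⟨hsub, fun h => ?_⟩
          exfalso
          have := h1.1.length_le
          rw [h] at this
          simp at this
        · -- B2 : node d (k-1) <+: node b' i'
          have hlen2 : b'.length + d.length < n := by simp at hlen; omega
          have h1 := (IH _ hlen2).1 b' d i' (k-1) le_rfl hi' hkk hB2
          rcases eq_or_ne d b' with h2 | h2
          · -- d = b' : then b' is a proper suffix of b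
            subst h2
            refine ⟨List.suffix_cons j0 d, fun h => ?_⟩
            exfalso
            have := congrArg List.length h
            simp at this
          · obtain ⟨j'', hj''⟩ := suffix_cons_of_proper h1.1 h2
            have hstart2 : rstart k pick root (j'' :: d) <+: node k pick root b' i' :=
              (start_mono hp hj'').trans (spine_spre hp _ _).1
            rw [rstart_cons] at hstart2
            have hjj : j'' = j0 :=
              Fin.ext (wstr_prefix ((List.prefix_append_right_inj _).1 (hstart2.trans hBr)))
            rw [hjj] at hj''
            -- so b = j0 :: d <:+ b'
            rcases eq_or_ne (j0 :: d) b' with h3 | h3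
            · subst h3
              exact ⟨List.suffix_rfl, fun _ => spine_le_of_prefix hp hpre⟩
            · exfalso
              obtain ⟨j', hj'⟩ := suffix_cons_of_proper hj'' h3
              have hstart3 : rstart k pick root (j' :: (j0 :: d)) <+: node k pick root b' i' :=
                (start_mono hp hj').trans (spine_spre hp _ _).1
              rw [rstart_cons] at hstart3
              have l1 := length_lt_of_wstr_prefix hstart3
              have l2 := hB.length_le
              have hx : (rstart k pick root (j0 :: d)).length < (node k pick root (j0 :: d) (k-1)).length :=
                (spre_iff.1 (start_prefix_node hp (j0 :: d) (k-1))).2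
              omega

omit hp in
lemma suffix_length_lt {α : Type*} {b' b : List α} (h : b' <:+ b) (hne : b' ≠ b) :
    b'.length < b.length := by
  rcases h.length_le.lt_or_eq with h2 | h2
  · exact h2
  · exact absurd (h.eq_of_length h2) hne

omit hp in
lemma suffix_drop_eq {α : Type*} {b' b : List α} (h : b' <:+ b) :
    b.drop (b.length - b'.length) = b' := by
  obtain ⟨t, rfl⟩ := h
  simp

lemma node_prefix_iff (hk : 0 < k) {b b' : List (Fin (k+1))} {i i' : ℕ}
    (hi : i < k) (hi' : i' < k) :
    node k pick root b' i' <+: node k pick root b i ↔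
      (b' <:+ b ∧ (b' = b → i' ≤ i)) := by
  constructor
  · exact fun h => (main_refl hp hk (b.length + b'.length)).1 b b' i i' le_rfl hi hi' h
  · rintro ⟨h, hii⟩
    exact node_prefix_node hp h (by omega) hii

lemma node_inj (hk : 0 < k) {b b' : List (Fin (k+1))} {i i' : ℕ}
    (hi : i < k) (hi' : i' < k) (h : node k pick root b i = node k pick root b' i') :
    b = b' ∧ i = i' := by
  have hpre1 : node k pick root b i <+: node k pick root b' i' := by rw [h]
  have hpre2 : node k pick root b' i' <+: node k pick root b i := by rw [h]
  have h1 := (node_prefix_iff hp hk hi' hi).1 hpre1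
  have h2 := (node_prefix_iff hp hk hi hi').1 hpre2
  have hb : b = b' := by
    by_contra hne
    have l1 : b.length < b'.length := suffix_length_lt h1.1 hne
    have l2 : b'.length < b.length := suffix_length_lt h2.1 (Ne.symm hne)
    omega
  subst hb
  exact ⟨rfl, le_antisymm (h1.2 rfl) (h2.2 rfl)⟩

lemma node_spre_iff (hk : 0 < k) {b b' : List (Fin (k+1))} {i i' : ℕ}
    (hi : i < k) (hi' : i' < k) :
    SPre (node k pick root b' i') (node k pick root b i) ↔
      ((b' <:+ b ∧ b' ≠ b) ∨ (b' = b ∧ i' < i)) := by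
  constructor
  · rintro ⟨hpre, hne⟩
    obtain ⟨hsub, hii⟩ := (node_prefix_iff hp hk hi hi').1 hpre
    rcases eq_or_ne b' b with h2 | h2
    · subst h2
      refine Or.inr ⟨rfl, lt_of_le_of_ne (hii rfl) fun he => hne ?_⟩
      rw [he]
    · exact Or.inl ⟨hsub, h2⟩
  · rintro (⟨hsub, hne⟩ | ⟨rfl, hii⟩)
    · exact node_spre_node hp hsub hne (by omega)
    · exact spine_spre_lt hp _ hii

omit hp in
lemma mem_RSet_node {b : List (Fin (k+1))} {i : ℕ} (hi : i < k) :
    node k pick root b i ∈ RSet k pick root := ⟨b, i, hi, rfl⟩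

lemma rk_node (hk : 0 < k) (b : List (Fin (k+1))) {i : ℕ} (hi : i < k) :
    rk (RSet k pick root) (node k pick root b i) = k * b.length + i := by
  classical
  set N := k * b.length + i with hN
  set g : ℕ → List Bool := fun m => node k pick root (b.drop (b.length - m / k)) (m % k)
    with hg
  have hqle : ∀ m, m < N → m / k ≤ b.length := by
    intro m hm
    have h1 : m < k * (b.length + 1) := by
      calc m < k * b.length + i := hm
      _ ≤ k * b.length + k := by omega
      _ = k * (b.length + 1) := by ring
    have := Nat.div_lt_of_lt_mul h1
    omega
  have hdrop_len : ∀ m, m < N → (b.drop (b.length - m / k)).length = m / k := by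
    intro m hm
    rw [List.length_drop, Nat.sub_sub_self (hqle m hm)]
  have hset : {τ ∈ RSet k pick root | SPre τ (node k pick root b i)} = g '' (Set.Iio N) := by
    ext τ
    constructor
    · rintro ⟨⟨b'', i'', hi'', rfl⟩, hsp⟩
      rcases (node_spre_iff hp hk hi hi'').1 hsp with ⟨hsub, hne⟩ | ⟨hbe, hii⟩
      · refine ⟨k * b''.length + i'', Set.mem_Iio.2 ?_, ?_⟩
        · have hlt := suffix_length_lt hsub hne
          calc k * b''.length + i'' < k * b''.length + k := by omega
          _ = k * (b''.length + 1) := by ring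
          _ ≤ k * b.length := Nat.mul_le_mul_left k (by omega)
          _ ≤ N := by omega
        · have hdiv : (k * b''.length + i'') / k = b''.length := by
            rw [Nat.mul_add_div hk, Nat.div_eq_of_lt hi'', Nat.add_zero]
          have hmod : (k * b''.length + i'') % k = i'' := by
            rw [Nat.mul_add_mod, Nat.mod_eq_of_lt hi'']
          rw [hg]
          simp only [hdiv, hmod]
          rw [suffix_drop_eq hsub]
      · refine ⟨k * b.length + i'', Set.mem_Iio.2 (by omega), ?_⟩
        have hdiv : (k * b.length + i'') / k = b.length := by
          rw [Nat.mul_add_div hk, Nat.div_eq_of_lt hi'', Nat.add_zero]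
        have hmod : (k * b.length + i'') % k = i'' := by
          rw [Nat.mul_add_mod, Nat.mod_eq_of_lt hi'']
        rw [hg]
        simp only [hdiv, hmod, Nat.sub_self, List.drop_zero]
        rw [hbe]
    · rintro ⟨m, hm, rfl⟩
      simp only [Set.mem_Iio] at hm
      have hr : m % k < k := Nat.mod_lt m hk
      have hqlen := hdrop_len m hm
      refine ⟨mem_RSet_node hr, (node_spre_iff hp hk hi hr).2 ?_⟩
      rcases eq_or_ne (m / k) b.length with hq | hq
      · refine Or.inr ⟨by simp [hq], ?_⟩
        have hdm := Nat.div_add_mod m k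
        rw [hq] at hdm
        omega
      · refine Or.inl ⟨List.drop_suffix _ _, fun he => ?_⟩
        have := congrArg List.length he
        rw [hqlen] at this
        have := hqle m hm
        omega
  have hinj : Set.InjOn g (Set.Iio N) := by
    intro m hm m' hm' he
    simp only [Set.mem_Iio] at hm hm'
    obtain ⟨hb, hi2⟩ := node_inj hp hk (Nat.mod_lt m hk) (Nat.mod_lt m' hk) he
    have l1 := hdrop_len m hm
    have l2 := hdrop_len m' hm'
    rw [hb] at l1
    have hq : m / k = m' / k := l1.symm.trans l2
    have hdm := Nat.div_add_mod m k
    have hdm' := Nat.div_add_mod m' k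
    rw [hq] at hdm
    omega
  rw [rk, hset, Set.ncard_image_of_injOn hinj, ← Finset.coe_range, Set.ncard_coe_finset,
    Finset.card_range]

lemma succ_iff_lt (hk : 0 < k) {b : List (Fin (k+1))} {i : ℕ} (hi1 : i + 1 < k)
    (τ : List Bool) :
    SuccIn (RSet k pick root) (node k pick root b i) τ ↔ τ = node k pick root b (i+1) := by
  have hi : i < k := by omega
  constructor
  · rintro ⟨hσ, ⟨b', i', hi', rfl⟩, hsp, hrk⟩
    rw [rk_node hp hk b' hi', rk_node hp hk b hi] at hrk
    have he : k * b'.length + i' = k * b.length + (i+1) := by omega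
    have hmod := congrArg (· % k) he
    simp only [Nat.mul_add_mod] at hmod
    rw [Nat.mod_eq_of_lt hi', Nat.mod_eq_of_lt hi1] at hmod
    have hlen : b'.length = b.length := Nat.eq_of_mul_eq_mul_left hk (by omega)
    rcases (node_spre_iff hp hk hi' hi).1 hsp with ⟨hsub, hne⟩ | ⟨hbe, _⟩
    · exact absurd hlen (by have := suffix_length_lt hsub hne; omega)
    · rw [hbe, hmod]
  · rintro rfl
    refine ⟨mem_RSet_node hi, mem_RSet_node hi1, spine_spre_lt hp _ (Nat.lt_succ_self i), ?_⟩
    rw [rk_node hp hk b hi, rk_node hp hk b hi1]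
    omega

lemma succ_iff_branch (hk : 0 < k) {b : List (Fin (k+1))} (τ : List Bool) :
    SuccIn (RSet k pick root) (node k pick root b (k-1)) τ ↔
      ∃ j : Fin (k+1), τ = node k pick root (j :: b) 0 := by
  have hkk : k - 1 < k := Nat.sub_lt hk one_pos
  constructor
  · rintro ⟨hσ, ⟨b', i', hi', rfl⟩, hsp, hrk⟩
    rw [rk_node hp hk b' hi', rk_node hp hk b hkk] at hrk
    have hrk2 : k * b'.length + i' = k * (b.length + 1) + 0 := by
      rw [Nat.mul_succ]
      omega
    have hmod : i' = 0 := by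
      have e := congrArg (· % k) hrk2
      simp only [Nat.mul_add_mod] at e
      rwa [Nat.mod_eq_of_lt hi', Nat.mod_eq_of_lt hk] at e
    have hlen : b'.length = b.length + 1 := by
      refine Nat.eq_of_mul_eq_mul_left hk ?_
      omega
    rcases (node_spre_iff hp hk hi' hkk).1 hsp with ⟨hsub, hne⟩ | ⟨hbe, hii⟩
    swap
    · exfalso; rw [hbe] at hlen; omega
    · obtain ⟨t, rfl⟩ := hsub
      have ht : t.length = 1 := by
        rw [List.length_append] at hlen
        omega
      obtain ⟨j, rfl⟩ := List.length_eq_one_iff.1 ht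
      exact ⟨j, by rw [hmod, List.singleton_append]⟩
  · rintro ⟨j, rfl⟩
    refine ⟨mem_RSet_node hkk, mem_RSet_node hk, ?_, ?_⟩
    · refine node_spre_node hp (List.suffix_cons j b) ?_ le_rfl
      intro h
      exact absurd (congrArg List.length h) (by simp)
    · rw [rk_node hp hk b hkk, rk_node hp hk (j :: b) hk]
      simp only [List.length_cons, Nat.mul_succ]
      omega

lemma rooted (hk : 0 < k) : Rooted (RSet k pick root) := by
  refine ⟨node k pick root [] 0, ⟨mem_RSet_node hk, ?_⟩, ?_⟩
  · rw [rk_node hp hk [] hk]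
    simp
  · rintro y ⟨⟨b, i, hi, rfl⟩, hrk⟩
    rw [rk_node hp hk b hi] at hrk
    have hi0 : i = 0 := by omega
    have hb0 : k * b.length = 0 := by omega
    have hb : b = [] := by
      rcases Nat.mul_eq_zero.1 hb0 with h | h
      · omega
      · exact List.length_eq_zero_iff.1 h
    rw [hi0, hb]

lemma mk_succ_lt (hk : 0 < k) {b : List (Fin (k+1))} {i : ℕ} (hi1 : i + 1 < k) :
    Cardinal.mk {ρ : List Bool // SuccIn (RSet k pick root) (node k pick root b i) ρ} = 1 := by
  haveI : Unique {ρ : List Bool // SuccIn (RSet k pick root) (node k pick root b i) ρ} :=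
    ⟨⟨⟨node k pick root b (i+1), (succ_iff_lt hp hk hi1 _).2 rfl⟩⟩,
      fun y => Subtype.ext ((succ_iff_lt hp hk hi1 _).1 y.2)⟩
  exact Cardinal.mk_eq_one _

lemma branch_inj (hk : 0 < k) (b : List (Fin (k+1))) :
    Function.Injective (fun j : Fin (k+1) => node k pick root (j :: b) 0) := by
  intro x y hxy
  have h := (node_inj hp hk hk hk hxy).1
  exact (List.cons_eq_cons.1 h).1

lemma succ_set_branch (hk : 0 < k) (b : List (Fin (k+1))) :
    {τ | SuccIn (RSet k pick root) (node k pick root b (k-1)) τ} =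
      Set.range (fun j : Fin (k+1) => node k pick root (j :: b) 0) := by
  ext τ
  rw [Set.mem_range, Set.mem_setOf_eq, succ_iff_branch hp hk]
  exact exists_congr fun j => eq_comm

lemma mk_succ_branch (hk : 0 < k) (b : List (Fin (k+1))) :
    Cardinal.mk {ρ : List Bool // SuccIn (RSet k pick root) (node k pick root b (k-1)) ρ} =
      Cardinal.mk (Fin (k+1)) := by
  have e : {ρ : List Bool // SuccIn (RSet k pick root) (node k pick root b (k-1)) ρ} ≃
      ↥(Set.range (fun j : Fin (k+1) => node k pick root (j :: b) 0)) :=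
    Equiv.subtypeEquivRight (fun ρ => by
      rw [← Set.mem_setOf_eq (p := fun τ => SuccIn (RSet k pick root)
        (node k pick root b (k-1)) τ), succ_set_branch hp hk b])
  rw [Cardinal.mk_congr e, Cardinal.mk_range_eq _ (branch_inj hp hk b)]

lemma symm (hk : 0 < k) : SymmTree (RSet k pick root) := by
  rintro σ ⟨b, i, hi, rfl⟩ τ ⟨b', i', hi', rfl⟩ hrk
  rw [rk_node hp hk b hi, rk_node hp hk b' hi'] at hrk
  have hii : i = i' := by
    have e := congrArg (· % k) hrk
    simp only [Nat.mul_add_mod] at e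
    rwa [Nat.mod_eq_of_lt hi, Nat.mod_eq_of_lt hi'] at e
  subst hii
  by_cases hcase : i + 1 < k
  · rw [mk_succ_lt hp hk hcase, mk_succ_lt hp hk hcase]
  · have hik : i = k - 1 := by omega
    subst hik
    rw [mk_succ_branch hp hk b, mk_succ_branch hp hk b']

end TreeLemmas

end RakeAux

/-- For every coloring `f : 2^{<ω} → ω` with finite range there exist a
nonempty finite `C ⊆ ω` and a good `C`-rake for `f` of height `ω`. -/
theorem exists_infinite_good_rake (f : List Bool → ℕ)
    (hf : (Set.range f).Finite) :
    ∃ C : Finset ℕ, C.Nonempty ∧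
      ∃ R : Set (List Bool), GoodRake f C R ∧ htSet R = ⊤ := by
  classical
  -- Step 1: a cone on which the set of colors is minimal
  have hex : ∃ n, ∃ (σ : List Bool) (D : Finset ℕ), D.card = n ∧ ∀ τ, σ <+: τ → f τ ∈ D :=
    ⟨hf.toFinset.card, [], hf.toFinset, rfl, fun τ _ => hf.mem_toFinset.2 ⟨τ, rfl⟩⟩
  obtain ⟨σ₀, C, hCcard, hC⟩ := Nat.find_spec hex
  have hCne : C.Nonempty := ⟨f σ₀, hC σ₀ List.prefix_rfl⟩
  have hk : 0 < C.card := Finset.card_pos.2 hCne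
  have hdense : ∀ c ∈ C, ∀ τ, σ₀ <+: τ → ∃ ρ, τ <+: ρ ∧ f ρ = c := by
    intro c hc τ hτ
    by_contra hno
    push_neg at hno
    have hlt : C.card - 1 < Nat.find hex := by omega
    exact Nat.find_min hex hlt ⟨τ, C.erase c, by rw [Finset.card_erase_of_mem hc],
      fun ρ hρ => Finset.mem_erase.2 ⟨hno ρ hρ, hC ρ (hτ.trans hρ)⟩⟩
  set k := C.card with hkdef
  set cs := C.sort (· ≤ ·) with hcs
  set col : ℕ → ℕ := fun i => cs.getD (i % k) 0 with hcol_def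
  have hcol : ∀ i, col i ∈ C := by
    intro i
    have hlen : i % k < cs.length := by
      rw [hcs, Finset.length_sort]
      exact Nat.mod_lt i hk
    rw [hcol_def]
    simp only [List.getD_eq_getElem cs 0 hlen]
    exact (Finset.mem_sort (α := ℕ) (· ≤ ·)).1 (List.getElem_mem hlen)
  -- Step 2: the picking function
  have hpick : ∀ s i, ∃ ρ, SPre s ρ ∧ (σ₀ <+: s → σ₀ <+: ρ ∧ f ρ = col i) := by
    intro s i
    by_cases hs : σ₀ <+: s
    · obtain ⟨ρ, hρ1, hρ2⟩ := hdense (col i) (hcol i) (s ++ [true])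
        (hs.trans (List.prefix_append s [true]))
      refine ⟨ρ, ⟨(List.prefix_append s [true]).trans hρ1, ?_⟩,
        fun _ => ⟨(hs.trans (List.prefix_append s [true])).trans hρ1, hρ2⟩⟩
      rintro rfl
      have := hρ1.length_le
      simp at this
    · refine ⟨s ++ [true], ⟨List.prefix_append _ _, ?_⟩, fun h => absurd h hs⟩
      intro h
      have := congrArg List.length h
      simp at this
  choose pick hp1 hp2 using hpick
  set R := RakeAux.RSet k pick σ₀ with hR
  -- the root is a prefix of everything in the rake
  have hstart_pre : ∀ b : List (Fin (k+1)), σ₀ <+: RakeAux.rstart k pick σ₀ b := by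
    intro b
    induction b with
    | nil => exact List.prefix_rfl
    | cons j c ih =>
      rw [RakeAux.rstart_cons]
      exact (ih.trans (RakeAux.spine_spre hp1 _ _).1).trans (List.prefix_append _ _)
  have hnode_pre : ∀ b i, σ₀ <+: RakeAux.node k pick σ₀ b i :=
    fun b i => (hstart_pre b).trans (RakeAux.spine_spre hp1 _ _).1
  have hspine_col : ∀ s, σ₀ <+: s → ∀ i,
      f (RakeAux.spine pick s i) = col i ∧ σ₀ <+: RakeAux.spine pick s i := by
    intro s hs i
    induction i with
    | zero => exact ⟨(hp2 s 0 hs).2, (hp2 s 0 hs).1⟩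
    | succ m ih => exact ⟨(hp2 _ (m+1) ih.2).2, (hp2 _ (m+1) ih.2).1⟩
  have hnode_col : ∀ b i, f (RakeAux.node k pick σ₀ b i) = col i :=
    fun b i => (hspine_col _ (hstart_pre b) i).1
  have hmodk : ∀ (L i : ℕ), i < k → (k * L + i) % k = i := by
    intro L i hi
    rw [Nat.mul_add_mod, Nat.mod_eq_of_lt hi]
  refine ⟨C, hCne, R, ⟨⟨?_, ?_, ?_, ?_, ?_⟩, ?_⟩, ?_⟩
  · -- Rooted
    exact RakeAux.rooted hp1 hk
  · -- SymmTree
    exact RakeAux.symm hp1 hk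
  · -- colors
    rintro σ ⟨b, i, hi, rfl⟩
    rw [RakeAux.rk_node hp1 hk b hi, hmodk _ _ hi, hnode_col b i, hcol_def]
    simp only [Nat.mod_eq_of_lt hi, hcs]
  · -- unique successors
    rintro σ ⟨b, i, hi, rfl⟩ hne
    rw [RakeAux.rk_node hp1 hk b hi, hmodk _ _ hi] at hne
    have hi1 : i + 1 < k := by omega
    exact ⟨RakeAux.node k pick σ₀ b (i+1), (RakeAux.succ_iff_lt hp1 hk hi1 _).2 rfl,
      fun y hy => (RakeAux.succ_iff_lt hp1 hk hi1 _).1 hy⟩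
  · -- branching successors
    rintro σ ⟨b, i, hi, rfl⟩ heq
    rw [RakeAux.rk_node hp1 hk b hi, hmodk _ _ hi] at heq
    subst heq
    right
    rw [RakeAux.succ_set_branch hp1 hk b]
    constructor
    · exact Set.finite_range _
    · rw [← Set.image_univ, Set.ncard_image_of_injective _ (RakeAux.branch_inj hp1 hk b),
        Set.ncard_univ]
      simp [hkdef]
  · -- goodness
    rintro ρ ⟨b, i, hi, rfl⟩ _ σ hσ
    exact hC σ ((hnode_pre b i).trans hσ)
  · -- height is ω
    rw [htSet, iSup₂_eq_top]
    intro m hm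
    lift m to ℕ using hm.ne
    refine ⟨RakeAux.node k pick σ₀ (List.replicate (m+1) 0) 0,
      RakeAux.mem_RSet_node hk, ?_⟩
    rw [RakeAux.rk_node hp1 hk _ hk]
    have h1 : m < k * (m+1) + 0 + 1 := by
      have : m + 1 ≤ k * (m + 1) := Nat.le_mul_of_pos_left (m+1) hk
      omega
    calc (m : ℕ∞) < ((k * (m+1) + 0 + 1 : ℕ) : ℕ∞) := by exact_mod_cast h1
    _ = ((k * (List.replicate (m+1) (0 : Fin (k+1))).length + 0 : ℕ) : ℕ∞) + 1 := by
      push_cast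
      simp
    _ = _ := by norm_num
end

section
/- Let f : 2^{<ω} → ω be a coloring, let C ⊆ ω be finite with |C| = k ≥ 1, let m ≥ 1, let R be a C-rake for f of height mk, and for each leaf λ of R fix a value c_λ ∈ C. Then there exist c ∈ C and a set S ⊴ R with S ≅ 2^{<m} such that f(σ) = c for all σ ∈ S, and c_λ = c for every leaf λ of R extending some leaf of S. -/
section Basic

lemma prefix_finite (σ : List Bool) : {τ : List Bool | τ <+: σ}.Finite := by
  apply Set.Finite.subset (Set.finite_range fun t : Fin (σ.length + 1) => σ.take t)
  intro τ hτ
  refine ⟨⟨τ.length, ?_⟩, ?_⟩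
  · have := hτ.length_le; omega
  · exact (List.prefix_iff_eq_take.mp hτ).symm

lemma rkset_finite (S : Set (List Bool)) (σ : List Bool) : {τ ∈ S | SPre τ σ}.Finite :=
  (prefix_finite σ).subset fun τ hτ => hτ.2.1

lemma SPre.length_lt {σ τ : List Bool} (h : SPre σ τ) : σ.length < τ.length := by
  rcases Nat.lt_or_ge σ.length τ.length with h' | h'
  · exact h'
  · exact absurd (h.1.eq_of_length (le_antisymm h.1.length_le h')) h.2

lemma SPre.trans_pre {σ τ ρ : List Bool} (h : SPre σ τ) (h' : τ <+: ρ) : SPre σ ρ :=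
  ⟨h.1.trans h', fun he => by
    have h1 := h.length_lt; have h2 := h'.length_le; subst he; omega⟩

lemma pre_trans_spre {σ τ ρ : List Bool} (h : σ <+: τ) (h' : SPre τ ρ) : SPre σ ρ :=
  ⟨h.trans h'.1, fun he => by
    have h1 := h.length_le; have h2 := h'.length_lt; subst he; omega⟩

/-- ranks strictly increase along strict prefixes in `S`. -/
lemma rk_lt_of_spre {S : Set (List Bool)} {σ τ : List Bool} (hσ : σ ∈ S)
    (h : SPre σ τ) : rk S σ < rk S τ := by
  have hsub : insert σ {x ∈ S | SPre x σ} ⊆ {x ∈ S | SPre x τ} := by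
    rintro x (rfl | ⟨hxS, hx⟩)
    · exact ⟨hσ, h⟩
    · exact ⟨hxS, hx.trans_pre h.1⟩
  have hfin := rkset_finite S τ
  have h1 : ({x ∈ S | SPre x σ}).ncard + 1 ≤ (insert σ {x ∈ S | SPre x σ}).ncard := by
    rw [Set.ncard_insert_of_notMem (fun hx => hx.2.2 rfl) ((rkset_finite S σ))]
  have h2 : (insert σ {x ∈ S | SPre x σ}).ncard ≤ ({x ∈ S | SPre x τ}).ncard :=
    Set.ncard_le_ncard hsub hfin
  unfold rk; omega

/-- equal elements: prefix with equal rank. -/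
lemma eq_of_prefix_rk_eq {S : Set (List Bool)} {σ τ : List Bool} (hσ : σ ∈ S)
    (h : σ <+: τ) (hrk : rk S σ = rk S τ) : σ = τ := by
  by_contra hne
  exact absurd hrk (Nat.ne_of_lt (rk_lt_of_spre hσ ⟨h, hne⟩))

/-- every element of positive rank has a predecessor (of which it is a successor). -/
lemma exists_pred {S : Set (List Bool)} {τ : List Bool} (hτ : τ ∈ S)
    (h : 0 < rk S τ) : ∃ σ, SuccIn S σ τ := by
  classical
  have hfin : ({x ∈ S | SPre x τ}).Finite := rkset_finite S τ
  have hne : ({x ∈ S | SPre x τ}).Nonempty := by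
    apply Set.nonempty_of_ncard_ne_zero; unfold rk at h; omega
  obtain ⟨σ, hσD, hσmax⟩ := Set.exists_max_image _ (fun x => x.length) hfin hne
  refine ⟨σ, hσD.1, hτ, hσD.2, ?_⟩
  have hkey : {x ∈ S | SPre x σ} = {x ∈ S | SPre x τ} \ {σ} := by
    ext x
    constructor
    · rintro ⟨hxS, hx⟩
      exact ⟨⟨hxS, hx.trans_pre hσD.2.1⟩, fun hxx => (hxx ▸ hx).2 rfl⟩
    · rintro ⟨⟨hxS, hx⟩, hxσ⟩
      simp only [Set.mem_singleton_iff] at hxσ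
      refine ⟨hxS, ?_, hxσ⟩
      rcases List.prefix_or_prefix_of_prefix hx.1 hσD.2.1 with h' | h'
      · exact h'
      · have hlen := hσmax x ⟨hxS, hx⟩
        exact absurd (h'.eq_of_length (le_antisymm h'.length_le hlen)).symm hxσ
  have hσrk : rk S σ = rk S τ - 1 := by
    unfold rk
    rw [hkey, Set.ncard_diff_singleton_of_mem hσD]
  unfold rk at h hσrk ⊢; omega

end Basic

section Anc

/-- ancestor at every smaller rank. -/
lemma exists_anc (S : Set (List Bool)) :
    ∀ (r : ℕ) (l : List Bool), l ∈ S → rk S l = r → ∀ s, s ≤ r →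
      ∃ a, a ∈ S ∧ a <+: l ∧ rk S a = s := by
  intro r
  induction r with
  | zero => exact fun l hl hr s hs => ⟨l, hl, List.prefix_rfl, by omega⟩
  | succ n ih =>
    intro l hl hr s hs
    rcases eq_or_lt_of_le hs with rfl | hlt
    · exact ⟨l, hl, List.prefix_rfl, hr⟩
    · obtain ⟨p, hp⟩ := exists_pred hl (by omega)
      have hpn : rk S p = n := by have := hp.2.2.2; omega
      obtain ⟨a, ha, hal, has⟩ := ih p hp.1 hpn s (by omega)
      exact ⟨a, ha, hal.trans hp.2.2.1.1, has⟩

/-- two prefixes of a common string with consecutive ranks form a successor pair. -/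
lemma succ_of_anc {S : Set (List Bool)} {p a l : List Bool} (hp : p ∈ S) (ha : a ∈ S)
    (hpl : p <+: l) (hal : a <+: l) (hrk : rk S a = rk S p + 1) : SuccIn S p a := by
  rcases List.prefix_or_prefix_of_prefix hpl hal with h | h
  · refine ⟨hp, ha, ⟨h, ?_⟩, hrk⟩
    rintro rfl; omega
  · exfalso
    rcases eq_or_ne a p with rfl | hne
    · omega
    · have := rk_lt_of_spre ha (⟨h, hne⟩ : SPre a p); omega

end Anc

section Rake

variable {f : List Bool → ℕ} {C : Finset ℕ} {k m : ℕ} {R : Set (List Bool)}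

lemma rk_lt_ht (hht : htSet R = ((m * k : ℕ) : ℕ∞)) {σ : List Bool} (hσ : σ ∈ R) :
    rk R σ < m * k := by
  have h1 : ((rk R σ : ℕ∞) + 1) ≤ htSet R := by
    unfold htSet
    exact le_iSup₂ (f := fun (σ : List Bool) (_ : σ ∈ R) => ((rk R σ : ℕ∞) + 1)) σ hσ
  rw [hht] at h1
  have : ((rk R σ + 1 : ℕ) : ℕ∞) ≤ ((m * k : ℕ) : ℕ∞) := by push_cast; exact_mod_cast h1
  have := Nat.cast_le.mp this
  omega

lemma exists_top (hk1 : 1 ≤ k) (hm : 1 ≤ m) (hht : htSet R = ((m * k : ℕ) : ℕ∞)) :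
    ∃ ν ∈ R, rk R ν = m * k - 1 := by
  by_contra hcon
  push_neg at hcon
  have hle : htSet R ≤ ((m * k - 1 : ℕ) : ℕ∞) := by
    unfold htSet
    apply iSup₂_le
    intro σ hσ
    have h1 := rk_lt_ht hht hσ
    have h2 := hcon σ hσ
    have : rk R σ + 1 ≤ m * k - 1 := by omega
    exact_mod_cast Nat.cast_le.mpr this
  rw [hht] at hle
  have := Nat.cast_le.mp hle
  have : 1 ≤ m * k := Nat.one_le_iff_ne_zero.mpr (by positivity)
  omega

lemma has_succ (hk1 : 1 ≤ k) (hm : 1 ≤ m) (hR : IsRake f C R)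
    (hht : htSet R = ((m * k : ℕ) : ℕ∞)) {τ : List Bool} (hτ : τ ∈ R)
    (h : rk R τ + 1 < m * k) : ∃ u, SuccIn R τ u := by
  obtain ⟨ν, hν, hνrk⟩ := exists_top hk1 hm hht
  obtain ⟨a, ha, hal, hark⟩ := exists_anc R _ ν hν hνrk (rk R τ + 1) (by omega)
  obtain ⟨p, hp⟩ := exists_pred ha (by omega)
  have hpτ : rk R p = rk R τ := by have := hp.2.2.2; omega
  have hcard := hR.2.1 τ hτ p hp.1 hpτ.symm
  have hne : Nonempty {ρ : List Bool // SuccIn R p ρ} := ⟨⟨a, hp⟩⟩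
  have : Cardinal.mk {ρ : List Bool // SuccIn R τ ρ} ≠ 0 := by
    rw [hcard]; exact Cardinal.mk_ne_zero_iff.mpr hne
  obtain ⟨⟨u, hu⟩⟩ := Cardinal.mk_ne_zero_iff.mp this
  exact ⟨u, hu⟩

lemma climb (hk1 : 1 ≤ k) (hm : 1 ≤ m) (hR : IsRake f C R)
    (hht : htSet R = ((m * k : ℕ) : ℕ∞)) :
    ∀ (t : ℕ) (τ : List Bool), τ ∈ R → rk R τ + t < m * k →
      ∃ σ, σ ∈ R ∧ τ <+: σ ∧ rk R σ = rk R τ + t := by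
  intro t
  induction t with
  | zero => exact fun τ hτ _ => ⟨τ, hτ, List.prefix_rfl, by omega⟩
  | succ n ih =>
    intro τ hτ hlt
    obtain ⟨σ, hσ, hτσ, hσrk⟩ := ih τ hτ (by omega)
    obtain ⟨u, hu⟩ := has_succ hk1 hm hR hht hσ (by omega)
    exact ⟨u, hu.2.1, hτσ.trans hu.2.2.1.1, by have := hu.2.2.2; omega⟩

lemma rk_of_leaf (hk1 : 1 ≤ k) (hm : 1 ≤ m) (hR : IsRake f C R)
    (hht : htSet R = ((m * k : ℕ) : ℕ∞)) {l : List Bool} (hl : IsLeaf R l) :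
    rk R l = m * k - 1 := by
  have h1 := rk_lt_ht hht hl.1
  by_contra hcon
  obtain ⟨u, hu⟩ := has_succ hk1 hm hR hht hl.1 (by omega)
  exact hl.2 u hu

lemma leaf_of_rk (hht : htSet R = ((m * k : ℕ) : ℕ∞)) {l : List Bool} (hl : l ∈ R)
    (hrk : rk R l = m * k - 1) : IsLeaf R l := by
  refine ⟨hl, fun u hu => ?_⟩
  have h1 := rk_lt_ht hht hu.2.1
  have h2 := hu.2.2.2
  have h3 : 0 < m * k := by
    rcases Nat.eq_zero_or_pos (m * k) with h | h
    · rw [h] at h1; omega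
    · exact h
  omega

/-- forced chain: anything in `R` above `a` of rank at most `rk l`, where all
ranks in between avoid branching levels, is a prefix of `l`. -/
lemma unique_above (hk1 : 1 ≤ k) (hk : C.card = k) (hR : IsRake f C R)
    {a l : List Bool} (ha : a ∈ R) (hl : l ∈ R) (hal : a <+: l)
    (hcond : ∀ s, rk R a ≤ s → s < rk R l → s % k ≠ k - 1) :
    ∀ b, b ∈ R → a <+: b → rk R b ≤ rk R l → b <+: l := by
  suffices H : ∀ d b, b ∈ R → a <+: b → rk R b ≤ rk R l → rk R b = rk R a + d → b <+: l by
    intro b hb hab hble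
    rcases le_or_gt (rk R a) (rk R b) with h | h
    · exact H (rk R b - rk R a) b hb hab hble (by omega)
    · rcases eq_or_ne a b with rfl | hne
      · exact hal
      · have := rk_lt_of_spre ha (⟨hab, hne⟩ : SPre a b); omega
  intro d
  induction d with
  | zero =>
    intro b hb hab _ hrk
    have : a = b := eq_of_prefix_rk_eq ha hab (by omega)
    exact this ▸ hal
  | succ n ih =>
    intro b hb hab hble hrk
    obtain ⟨p, hp⟩ := exists_pred hb (by omega)
    have hprk : rk R p = rk R a + n := by have := hp.2.2.2; omega
    have hap : a <+: p := by
      rcases List.prefix_or_prefix_of_prefix hab hp.2.2.1.1 with h | h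
      · exact h
      · rcases eq_or_ne p a with rfl | hne
        · exact List.prefix_rfl
        · have := rk_lt_of_spre hp.1 (⟨h, hne⟩ : SPre p a); omega
    have hpl : p <+: l := ih p hp.1 hap (by omega) hprk
    have hmod : rk R p % k ≠ k - 1 := hcond (rk R p) (by omega) (by omega)
    obtain ⟨u, -, huniq⟩ := hR.2.2.2.1 p hp.1 (by rw [hk]; exact hmod)
    obtain ⟨a₁, ha₁, ha₁l, ha₁rk⟩ := exists_anc R _ l hl rfl (rk R b) hble
    have hs₁ : SuccIn R p a₁ := succ_of_anc hp.1 ha₁ hpl ha₁l (by omega)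
    have : b = a₁ := (huniq b hp).trans (huniq a₁ hs₁).symm
    exact this ▸ ha₁l

end Rake

section Key

lemma mod_ne_block (k B s : ℕ) (h1 : B * k ≤ s) (h2 : s < B * k + (k - 1)) :
    s % k ≠ k - 1 := by
  have hs : s % k = (s - B * k) % k := by
    conv_lhs => rw [show s = k * B + (s - B * k) by rw [Nat.mul_comm]; omega]
    rw [Nat.mul_add_mod]
  rw [hs, Nat.mod_eq_of_lt (by omega)]
  omega

lemma branch {f : List Bool → ℕ} {C : Finset ℕ} {k m : ℕ} {R : Set (List Bool)}
    (hk1 : 1 ≤ k) (hm : 1 ≤ m) (hk : C.card = k) (hR : IsRake f C R)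
    (hht : htSet R = ((m * k : ℕ) : ℕ∞)) {σ : List Bool} (hσ : σ ∈ R)
    (hmod : rk R σ % k = k - 1) (hlt : rk R σ + 1 < m * k) :
    {u | SuccIn R σ u}.Finite ∧ {u | SuccIn R σ u}.ncard = k + 1 := by
  rcases hR.2.2.2.2 σ hσ (by rw [hk]; exact hmod) with h | h
  · exfalso
    obtain ⟨u, hu⟩ := has_succ hk1 hm hR hht hσ hlt
    exact h u hu
  · rw [hk] at h; exact h

lemma succ_incomp {S : Set (List Bool)} {σ u₁ u₂ : List Bool}
    (h1 : SuccIn S σ u₁) (h2 : SuccIn S σ u₂) (hne : u₁ ≠ u₂) : ¬ u₁ <+: u₂ := by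
  intro h
  have := rk_lt_of_spre h1.2.1 (⟨h, hne⟩ : SPre u₁ u₂)
  have e1 := h1.2.2.2; have e2 := h2.2.2.2
  omega

/-- extend a level-`j` embedding below a root via two branches. -/
def extE (j : ℕ) (root : List Bool)
    (g : Bool → {σ : List Bool // σ.length < j} → List Bool) :
    {σ : List Bool // σ.length < j + 1} → List Bool
  | ⟨[], _⟩ => root
  | ⟨b :: t, h⟩ => g b ⟨t, by simp only [List.length_cons] at h; omega⟩

lemma extE_nil (j : ℕ) (root : List Bool) (g) (h) : extE j root g ⟨[], h⟩ = root := rfl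

lemma extE_cons (j : ℕ) (root : List Bool) (g) (b : Bool) (t : List Bool)
    (h : (b :: t).length < j + 1) (h' : t.length < j) :
    extE j root g ⟨b :: t, h⟩ = g b ⟨t, h'⟩ := rfl

lemma key (f : List Bool → ℕ) (C : Finset ℕ) (k m : ℕ)
    (hk : C.card = k) (hk1 : 1 ≤ k) (hm : 1 ≤ m)
    (R : Set (List Bool)) (hR : IsRake f C R)
    (hht : htSet R = ((m * k : ℕ) : ℕ∞))
    (c : List Bool → ℕ) (hc : ∀ l, IsLeaf R l → c l ∈ C) :
    ∀ j, 1 ≤ j → j ≤ m → ∀ τ, τ ∈ R → rk R τ = (m - j) * k →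
      ∃ i, i < k ∧ ∃ e : {σ : List Bool // σ.length < j} → List Bool,
        (∀ x, e x ∈ R) ∧
        (∀ x, τ <+: e x) ∧
        (∀ x, rk R (e x) = (m - j + x.1.length) * k + i) ∧
        (∀ x y, x.1 <+: y.1 ↔ e x <+: e y) ∧
        (∀ l, IsLeaf R l → ∀ x : {σ : List Bool // σ.length < j},
          x.1.length = j - 1 → e x <+: l → c l = (C.sort (· ≤ ·)).getD i 0) := by
  intro j
  induction j with
  | zero => omega
  | succ j ih =>
    intro _ h2 τ hτ hrk
    set B := m - (j + 1) with hB
    have hBj : B + (j + 1) = m := by omega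
    have hsm : (B + 1) * k = B * k + k := Nat.succ_mul B k
    have hble : (B + 1) * k ≤ m * k := Nat.mul_le_mul_right k (by omega)
    -- the chain top of the block above τ
    obtain ⟨σK, hσK, hτσK, hσKrk⟩ :=
      climb hk1 hm hR hht (k - 1) τ hτ (by omega)
    rw [hrk] at hσKrk
    rcases Nat.eq_zero_or_pos j with rfl | hj
    · -- base case : j + 1 = 1, B = m - 1
      have hBm : B + 1 = m := by omega
      have hKtop : rk R σK = m * k - 1 := by
        rw [hσKrk, ← hBm, hsm]; omega
      have hleafK : IsLeaf R σK := leaf_of_rk hht hσK hKtop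
      have hcK : c σK ∈ C := hc σK hleafK
      have hmem : c σK ∈ C.sort (· ≤ ·) := Finset.mem_sort _ |>.mpr hcK
      obtain ⟨i, hilen, hieq⟩ := List.mem_iff_getElem.mp hmem
      rw [Finset.length_sort, hk] at hilen
      have hgetD : (C.sort (· ≤ ·)).getD i 0 = c σK := by
        rw [List.getD_eq_getElem _ _ (by rw [Finset.length_sort, hk]; exact hilen)]
        exact hieq
      obtain ⟨σi, hσi, hτσi, hσirk⟩ := climb hk1 hm hR hht i τ hτ (by omega)
      rw [hrk] at hσirk
      have hcond : ∀ s, rk R τ ≤ s → s < rk R σK → s % k ≠ k - 1 := by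
        intro s hs1 hs2
        rw [hrk] at hs1; rw [hσKrk] at hs2
        exact mod_ne_block k B s hs1 hs2
      have hσiK : σi <+: σK :=
        unique_above hk1 hk hR hτ hσK hτσK hcond σi hσi hτσi (by omega)
      refine ⟨i, hilen, fun _ => σi, fun _ => hσi, fun _ => hτσi, ?_, ?_, ?_⟩
      · rintro ⟨x, hx⟩
        have hx0 : x.length = 0 := by omega
        show rk R σi = (m - (0 + 1) + x.length) * k + i
        rw [hx0, Nat.add_zero, ← hB, hσirk]
      · rintro ⟨x, hx⟩ ⟨y, hy⟩
        have hx0 : x = [] := List.eq_nil_of_length_eq_zero (by omega)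
        have hy0 : y = [] := List.eq_nil_of_length_eq_zero (by omega)
        subst hx0; subst hy0
        simp
      · intro l hl x _ hel
        have hlrk : rk R l = m * k - 1 := rk_of_leaf hk1 hm hR hht hl
        have hcond' : ∀ s, rk R σi ≤ s → s < rk R l → s % k ≠ k - 1 := by
          intro s hs1 hs2
          rw [hσirk] at hs1; rw [hlrk] at hs2
          exact mod_ne_block k B s (by omega) (by omega)
        have hKl : σK <+: l :=
          unique_above hk1 hk hR hσi hl.1 hel hcond' σK hσK hσiK (by omega)
        have : σK = l := eq_of_prefix_rk_eq hσK hKl (by omega)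
        rw [← this, hgetD]
    · -- inductive step : j ≥ 1
      have hKmod : rk R σK % k = k - 1 := by
        rw [hσKrk]
        have : (B * k + (k - 1)) % k = (k - 1) % k := by
          conv_lhs => rw [show B * k + (k - 1) = k * B + (k - 1) by ring]
          exact Nat.mul_add_mod k B (k - 1)
        rw [this, Nat.mod_eq_of_lt (by omega)]
      have hKlt : rk R σK + 1 < m * k := by
        have h' : (B + 1) * k < m * k := Nat.mul_lt_mul_of_lt_of_le (by omega) le_rfl hk1
        omega
      obtain ⟨hTfin, hTcard⟩ := branch hk1 hm hk hR hht hσK hKmod hKlt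
      -- apply the inductive hypothesis to each successor
      have H : ∀ u, SuccIn R σK u → rk R u = (m - j) * k := by
        intro u hu
        have := hu.2.2.2
        have hmj : m - j = B + 1 := by omega
        rw [hmj, hsm]; omega
      have IH : ∀ u, SuccIn R σK u →
          ∃ i, i < k ∧ ∃ e : {σ : List Bool // σ.length < j} → List Bool,
            (∀ x, e x ∈ R) ∧ (∀ x, u <+: e x) ∧
            (∀ x, rk R (e x) = (m - j + x.1.length) * k + i) ∧
            (∀ x y, x.1 <+: y.1 ↔ e x <+: e y) ∧
            (∀ l, IsLeaf R l → ∀ x : {σ : List Bool // σ.length < j},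
              x.1.length = j - 1 → e x <+: l → c l = (C.sort (· ≤ ·)).getD i 0) :=
        fun u hu => ih (by omega) (by omega) u hu.2.1 (H u hu)
      choose I hIlt E hE1 hE2 hE3 hE4 hE5 using IH
      -- pigeonhole among the k+1 successors
      classical
      have hTcard' : (Finset.range k).card < hTfin.toFinset.card := by
        rw [Finset.card_range, ← Set.ncard_eq_toFinset_card _ hTfin]
        omega
      obtain ⟨u₁, hu₁m, u₂, hu₂m, hune, hueq⟩ :=
        Finset.exists_ne_map_eq_of_card_lt_of_maps_to hTcard'
          (f := fun u => if hu : SuccIn R σK u then I u hu else 0)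
          (by
            intro u hu
            have hu' : SuccIn R σK u := hTfin.mem_toFinset.mp hu
            show (if hu : SuccIn R σK u then I u hu else 0) ∈ Finset.range k
            rw [dif_pos hu']
            exact Finset.mem_range.mpr (hIlt u hu'))
      have h₁ : SuccIn R σK u₁ := hTfin.mem_toFinset.mp hu₁m
      have h₂ : SuccIn R σK u₂ := hTfin.mem_toFinset.mp hu₂m
      have hueq' : (if hu : SuccIn R σK u₁ then I u₁ hu else 0)
          = (if hu : SuccIn R σK u₂ then I u₂ hu else 0) := hueq
      rw [dif_pos h₁, dif_pos h₂] at hueq'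
      set i := I u₁ h₁ with hi
      have hik : i < k := hIlt u₁ h₁
      -- the two chosen branches
      set ub : Bool → List Bool := fun b => bif b then u₂ else u₁ with hub'
      have hubF : ub false = u₁ := rfl
      have hubT : ub true = u₂ := rfl
      have hub : ∀ b, SuccIn R σK (ub b) := by
        intro b; cases b
        · exact h₁
        · exact h₂
      have hubI : ∀ b (h : SuccIn R σK (ub b)), I (ub b) h = i := by
        intro b h; cases b
        · rfl
        · exact hueq'.symm
      have hinc : ∀ b b', b ≠ b' → ¬ ub b <+: ub b' := by
        intro b b' hbb
        have hne2 : ub b ≠ ub b' := by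
          cases b <;> cases b'
          · exact absurd rfl hbb
          · show u₁ ≠ u₂; exact hune
          · show u₂ ≠ u₁; exact hune.symm
          · exact absurd rfl hbb
        exact succ_incomp (hub b) (hub b') hne2
      -- the new chain node at offset i in this block
      obtain ⟨σi, hσi, hτσi, hσirk⟩ := climb hk1 hm hR hht i τ hτ (by omega)
      rw [hrk] at hσirk
      have hcond : ∀ s, rk R τ ≤ s → s < rk R σK → s % k ≠ k - 1 := by
        intro s hs1 hs2
        rw [hrk] at hs1; rw [hσKrk] at hs2
        exact mod_ne_block k B s hs1 hs2
      have hσiK : σi <+: σK :=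
        unique_above hk1 hk hR hτ hσK hτσK hcond σi hσi hτσi (by omega)
      -- assemble the embedding
      refine ⟨i, hik, extE j σi (fun b y => E (ub b) (hub b) y), ?_, ?_, ?_, ?_, ?_⟩
      · rintro ⟨(_ | ⟨b, t⟩), hx⟩
        · exact hσi
        · exact hE1 _ _ _
      · rintro ⟨(_ | ⟨b, t⟩), hx⟩
        · exact hτσi
        · exact hτσK.trans ((hub b).2.2.1.1.trans (hE2 _ _ _))
      · rintro ⟨(_ | ⟨b, t⟩), hx⟩
        · simpa [extE_nil] using hσirk
        · have ht : t.length < j := by simp only [List.length_cons] at hx; omega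
          rw [extE_cons j σi _ b t hx ht, hE3, hubI]
          have harith : m - j + t.length = m - (j + 1) + (b :: t).length := by
            simp only [List.length_cons]; omega
          rw [harith]
      · rintro ⟨(_ | ⟨b, t⟩), hx⟩ ⟨(_ | ⟨b', t'⟩), hy⟩
        · simp
        · constructor
          · intro _
            exact hσiK.trans ((hub b').2.2.1.1.trans (hE2 _ _ _))
          · intro _; exact List.nil_prefix
        · constructor
          · intro h; exact absurd h.length_le (by simp)
          · intro h
            exfalso
            have h1 : ub b <+: σK := ((hE2 (ub b) (hub b) _).trans h).trans hσiK
            have h2 := (hub b).2.2.1.length_lt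
            exact absurd h1.length_le (by omega)
        · have ht : t.length < j := by simp only [List.length_cons] at hx; omega
          have ht' : t'.length < j := by simp only [List.length_cons] at hy; omega
          by_cases hbb : b = b'
          · subst hbb
            rw [List.cons_prefix_cons]
            rw [extE_cons j σi _ b t hx ht, extE_cons j σi _ b t' hy ht']
            constructor
            · rintro ⟨-, hpre⟩
              exact (hE4 (ub b) (hub b) ⟨t, ht⟩ ⟨t', ht'⟩).mp hpre
            · intro h
              exact ⟨rfl, (hE4 (ub b) (hub b) ⟨t, ht⟩ ⟨t', ht'⟩).mpr h⟩
          · constructor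
            · intro h
              exact absurd (List.cons_prefix_cons.mp h).1 hbb
            · intro h
              exfalso
              rw [extE_cons j σi _ b t hx ht, extE_cons j σi _ b' t' hy ht'] at h
              have hb1 : ub b <+: E (ub b') (hub b') ⟨t', ht'⟩ :=
                (hE2 (ub b) (hub b) ⟨t, ht⟩).trans h
              have hb2 : ub b' <+: E (ub b') (hub b') ⟨t', ht'⟩ := hE2 _ _ _
              rcases List.prefix_or_prefix_of_prefix hb1 hb2 with h' | h'
              · exact hinc b b' hbb h'
              · exact hinc b' b (Ne.symm hbb) h'
      · rintro l hl ⟨(_ | ⟨b, t⟩), hx⟩ hlen hel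
        · simp only [List.length_nil] at hlen; omega
        · have ht : t.length < j := by simp only [List.length_cons] at hx; omega
          rw [extE_cons j σi _ b t hx ht] at hel
          have := hE5 (ub b) (hub b) l hl ⟨t, ht⟩
            (by show t.length = j - 1; simp only [List.length_cons] at hlen; omega) hel
          rwa [hubI b (hub b)] at this

end Key

section Assemble

lemma rk_range {m : ℕ} (e : {σ : List Bool // σ.length < m} → List Bool)
    (hE4 : ∀ x y, x.1 <+: y.1 ↔ e x <+: e y) (x : {σ : List Bool // σ.length < m}) :
    rk (Set.range e) (e x) = x.1.length := by
  have hEinj : Function.Injective e := by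
    intro x y h
    have h1 : x.1 <+: y.1 := (hE4 x y).mpr (h ▸ List.prefix_rfl)
    have h2 : y.1 <+: x.1 := (hE4 y x).mpr (h ▸ List.prefix_rfl)
    exact Subtype.ext (h1.eq_of_length (le_antisymm h1.length_le h2.length_le))
  have hSPre : ∀ x y, SPre x.1 y.1 ↔ SPre (e x) (e y) := by
    intro x y
    constructor
    · rintro ⟨h, hne⟩
      exact ⟨(hE4 x y).mp h, fun he => hne (congrArg Subtype.val (hEinj he))⟩
    · rintro ⟨h, hne⟩
      refine ⟨(hE4 x y).mpr h, fun he => hne ?_⟩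
      exact congrArg e (Subtype.ext he)
  have him : {τ ∈ Set.range e | SPre τ (e x)} = e '' {y | SPre y.1 x.1} := by
    ext z
    constructor
    · rintro ⟨⟨y, rfl⟩, hsp⟩
      exact ⟨y, (hSPre y x).mpr hsp, rfl⟩
    · rintro ⟨y, hy, rfl⟩
      exact ⟨⟨y, rfl⟩, (hSPre y x).mp hy⟩
  have hg : ∀ t, t < x.1.length → (x.1.take t).length < m := by
    intro t ht
    rw [List.length_take]
    have := x.2; omega
  have hset : {y : {σ : List Bool // σ.length < m} | SPre y.1 x.1} =
      (fun t : ℕ => if h : t < x.1.length then (⟨x.1.take t, hg t h⟩ :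
        {σ : List Bool // σ.length < m}) else x) '' (Set.Iio x.1.length) := by
    ext y
    constructor
    · intro hy
      have hlt : y.1.length < x.1.length := hy.length_lt
      refine ⟨y.1.length, hlt, ?_⟩
      simp only [dif_pos hlt]
      exact Subtype.ext (List.prefix_iff_eq_take.mp hy.1).symm
    · rintro ⟨t, ht, rfl⟩
      simp only [Set.mem_Iio] at ht
      simp only [dif_pos ht]
      refine ⟨List.take_prefix t x.1, fun he => ?_⟩
      have := congrArg List.length he
      rw [List.length_take] at this
      omega
  unfold rk
  rw [him, Set.ncard_image_of_injective _ hEinj, hset]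
  rw [Set.ncard_image_of_injOn, show Set.Iio x.1.length = ↑(Finset.range x.1.length) by
    ext; simp, Set.ncard_coe_finset, Finset.card_range]
  intro t1 ht1 t2 ht2 heq
  simp only [Set.mem_Iio] at ht1 ht2
  simp only [dif_pos ht1, dif_pos ht2] at heq
  have := congrArg (fun z => z.1.length) heq
  simp only [List.length_take] at this
  omega

end Assemble

/-- Given a `C`-rake `R` for `f` of height `m·k` (`k = |C| ≥ 1`, `m ≥ 1`) and
a choice of `c λ ∈ C` for each leaf `λ` of `R`, there are a color `c₀ ∈ C`
and a set `S ⊴ R` with `S ≅ 2^{<m}` such that `f` is constantly `c₀` on `S`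
and `c λ = c₀` for every leaf `λ` of `R` extending some leaf of `S`. -/
theorem rake_monochromatic_selection (f : List Bool → ℕ) (C : Finset ℕ)
    (k m : ℕ) (hk : C.card = k) (hk1 : 1 ≤ k) (hm : 1 ≤ m)
    (R : Set (List Bool)) (hR : IsRake f C R)
    (hht : htSet R = ((m * k : ℕ) : ℕ∞))
    (c : List Bool → ℕ) (hc : ∀ l, IsLeaf R l → c l ∈ C) :
    ∃ c₀ ∈ C, ∃ S : Set (List Bool), SubRake C R S ∧ IsoLt (m : ℕ∞) S ∧
      (∀ σ ∈ S, f σ = c₀) ∧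
      (∀ l, IsLeaf R l → (∃ σ, IsLeaf S σ ∧ σ <+: l) → c l = c₀) := by
  obtain ⟨ρ, ⟨hρR, hρ0⟩, -⟩ := hR.1
  obtain ⟨i, hik, e, hE1, hE2, hE3, hE4, hE5⟩ :=
    key f C k m hk hk1 hm R hR hht c hc m hm le_rfl ρ hρR
      (by rw [hρ0, Nat.sub_self, Nat.zero_mul])
  set L := C.sort (· ≤ ·) with hL
  have hLlen : L.length = k := by rw [hL, Finset.length_sort, hk]
  have hc₀ : L.getD i 0 ∈ C := by
    rw [List.getD_eq_getElem L 0 (by omega)]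
    exact Finset.mem_sort (α := ℕ) (· ≤ ·) |>.mp (List.getElem_mem _)
  set S := Set.range e with hS
  have hEinj : Function.Injective e := by
    intro x y h
    have h1 : x.1 <+: y.1 := (hE4 x y).mpr (h ▸ List.prefix_rfl)
    have h2 : y.1 <+: x.1 := (hE4 y x).mpr (h ▸ List.prefix_rfl)
    exact Subtype.ext (h1.eq_of_length (le_antisymm h1.length_le h2.length_le))
  have hrkS : ∀ x, rk S (e x) = x.1.length := rk_range e hE4
  have hrkR : ∀ x, rk R (e x) = x.1.length * k + i := by
    intro x
    rw [hE3 x, Nat.sub_self, Nat.zero_add]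
  have hmodR : ∀ x, rk R (e x) % C.card = i := by
    intro x
    rw [hrkR x, hk, Nat.mul_comm, Nat.mul_add_mod, Nat.mod_eq_of_lt hik]
  have hiso : IsoLt (m : ℕ∞) S := by
    refine ⟨fun x => e ⟨x.1, by exact_mod_cast x.2⟩, ?_, ?_⟩
    · ext z
      constructor
      · rintro ⟨x, rfl⟩
        exact ⟨⟨x.1, by exact_mod_cast x.2⟩, rfl⟩
      · rintro ⟨x, rfl⟩
        exact ⟨⟨x.1, by exact_mod_cast x.2⟩, rfl⟩
    · intro x y
      show x.1 <+: y.1 ↔ e ⟨x.1, _⟩ <+: e ⟨y.1, _⟩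
      exact hE4 ⟨x.1, by exact_mod_cast x.2⟩ ⟨y.1, by exact_mod_cast y.2⟩
  refine ⟨L.getD i 0, hc₀, S, ⟨?_, ⟨(m : ℕ∞), ?_, hiso⟩, ?_, ?_⟩, hiso, ?_, ?_⟩
  · rintro z ⟨x, rfl⟩
    exact hE1 x
  · rw [hht]
    exact_mod_cast Nat.cast_le.mpr (Nat.le_mul_of_pos_right m hk1)
  · rintro z ⟨x, rfl⟩
    rw [hrkS x, hrkR x, hk, Nat.mul_comm, Nat.mul_add_div (by omega),
      Nat.div_eq_of_lt hik, Nat.add_zero]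
  · rintro z ⟨x, rfl⟩ w ⟨y, rfl⟩
    rw [hmodR x, hmodR y]
  · rintro z ⟨x, rfl⟩
    rw [hR.2.2.1 (e x) (hE1 x), ← hL, hmodR x]
  · rintro l hl ⟨z, hzleaf, hzl⟩
    obtain ⟨x, rfl⟩ := hzleaf.1
    have hxlen : x.1.length = m - 1 := by
      by_contra hcon
      have hlt : x.1.length + 1 < m := by have := x.2; omega
      have hy : (x.1 ++ [false]).length < m := by simp; omega
      apply hzleaf.2 (e ⟨x.1 ++ [false], hy⟩)
      refine ⟨⟨x, rfl⟩, ⟨⟨x.1 ++ [false], hy⟩, rfl⟩, ?_, ?_⟩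
      · refine ⟨(hE4 x ⟨x.1 ++ [false], hy⟩).mp (List.prefix_append _ _), fun he => ?_⟩
        have := congrArg (fun z => z.1.length) (hEinj he)
        simp at this
      · rw [hrkS, hrkS]
        simp
    exact hE5 l hl x hxlen hzl
end
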